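/- arXiv:2203.00252 — 10 statements merged into one kernel-verified Lean document; each statement's English description precedes it below -/
import Mathlib

section
/- Suppose σ, τ, δ₁, δ₂ > 0 satisfy στ‖A‖² ≤ δ₁δ₂. Then for all admissible (x,x') and (z,z'), both primal–dual distances satisfy d_±(x,z;x',z') ≥ ((1−δ₁)/(2τ))‖x−x'‖_p² + ((1−δ₂)/(2σ))‖z−z'‖_d². In particular, if στ‖A‖² ≤ 1 then d_+ and d_− are nonnegative (so the kernels φ_±(x,z) = (1/τ)φ_p(x) + (1/σ)φ_d(z) ± ⟨z, Ax⟩ are convex), and if στ‖A‖² < 1 they are bounded below by a positive multiple of ‖x−x'‖_p² + ‖z−z'‖_d². -/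
open scoped RealInnerProductSpace

/-- Bregman distance generated by kernel `φ` with gradient map `g`. -/
noncomputable def breg {V : Type*} [NormedAddCommGroup V] [InnerProductSpace ℝ V]
    (φ : V → ℝ) (g : V → V) (x x' : V) : ℝ :=
  φ x - φ x' - ⟪g x', x - x'⟫

/-- The primal–dual distance `d₊/d₋` (`s = 1` gives `d₊`, `s = -1` gives `d₋`). -/
noncomputable def dpm {V W : Type*} [NormedAddCommGroup V] [InnerProductSpace ℝ V]
    [NormedAddCommGroup W] [InnerProductSpace ℝ W]
    (τ σ s : ℝ) (φp : V → ℝ) (gp : V → V) (φd : W → ℝ) (gd : W → W)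
    (A : V →L[ℝ] W) (x : V) (z : W) (x' : V) (z' : W) : ℝ :=
  (1/τ) * breg φp gp x x' + (1/σ) * breg φd gd z z' + s * ⟪z - z', A (x - x')⟫

lemma amgm_aux (u v w a b : ℝ) (hu : 0 < u) (hab : 0 ≤ a*b) (h : w^2 ≤ u*v) :
    2*w*(a*b) ≤ u*a^2 + v*b^2 := by
  nlinarith [sq_nonneg (u*a - w*b), mul_nonneg (sub_nonneg.2 h) (sq_nonneg b)]

theorem stmt2 {n m : ℕ}
    (φp : EuclideanSpace ℝ (Fin n) → ℝ)
    (gp : EuclideanSpace ℝ (Fin n) → EuclideanSpace ℝ (Fin n))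
    (domp : Set (EuclideanSpace ℝ (Fin n)))
    (hpconv : ConvexOn ℝ domp φp)
    (hgp : ∀ u ∈ interior domp, HasGradientAt φp (gp u) u)
    (φd : EuclideanSpace ℝ (Fin m) → ℝ)
    (gd : EuclideanSpace ℝ (Fin m) → EuclideanSpace ℝ (Fin m))
    (domd : Set (EuclideanSpace ℝ (Fin m)))
    (hdconv : ConvexOn ℝ domd φd)
    (hgd : ∀ u ∈ interior domd, HasGradientAt φd (gd u) u)
    (np : EuclideanSpace ℝ (Fin n) → ℝ) (nd : EuclideanSpace ℝ (Fin m) → ℝ)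
    (hnp : ∀ u, 0 ≤ np u) (hnd : ∀ v, 0 ≤ nd v)
    (A : EuclideanSpace ℝ (Fin n) →L[ℝ] EuclideanSpace ℝ (Fin m))
    (nA : ℝ) (hnA : 0 ≤ nA)
    (hA : ∀ u v, |⟪v, A u⟫| ≤ nA * np u * nd v)
    (hscp : ∀ x ∈ domp, ∀ x' ∈ interior domp,
      (1/2) * (np (x - x'))^2 ≤ breg φp gp x x')
    (hscd : ∀ z ∈ domd, ∀ z' ∈ interior domd,
      (1/2) * (nd (z - z'))^2 ≤ breg φd gd z z')
    (σ τ δ₁ δ₂ : ℝ) (hσ : 0 < σ) (hτ : 0 < τ) (hδ₁ : 0 < δ₁) (hδ₂ : 0 < δ₂)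
    (hstep : σ * τ * nA^2 ≤ δ₁ * δ₂) :
    (∀ x ∈ domp, ∀ x' ∈ interior domp, ∀ z ∈ domd, ∀ z' ∈ interior domd,
      ((1 - δ₁)/(2*τ)) * (np (x - x'))^2 + ((1 - δ₂)/(2*σ)) * (nd (z - z'))^2
          ≤ dpm τ σ 1 φp gp φd gd A x z x' z' ∧
      ((1 - δ₁)/(2*τ)) * (np (x - x'))^2 + ((1 - δ₂)/(2*σ)) * (nd (z - z'))^2
          ≤ dpm τ σ (-1) φp gp φd gd A x z x' z') ∧
    (σ * τ * nA^2 ≤ 1 →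
      ∀ x ∈ domp, ∀ x' ∈ interior domp, ∀ z ∈ domd, ∀ z' ∈ interior domd,
        0 ≤ dpm τ σ 1 φp gp φd gd A x z x' z' ∧
        0 ≤ dpm τ σ (-1) φp gp φd gd A x z x' z') ∧
    (σ * τ * nA^2 < 1 →
      ∃ c > 0, ∀ x ∈ domp, ∀ x' ∈ interior domp, ∀ z ∈ domd, ∀ z' ∈ interior domd,
        c * ((np (x - x'))^2 + (nd (z - z'))^2) ≤ dpm τ σ 1 φp gp φd gd A x z x' z' ∧
        c * ((np (x - x'))^2 + (nd (z - z'))^2) ≤ dpm τ σ (-1) φp gp φd gd A x z x' z') := by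

  have key : ∀ e₁ e₂ : ℝ, 0 < e₁ → 0 < e₂ → σ * τ * nA^2 ≤ e₁ * e₂ →
      ∀ x ∈ domp, ∀ x' ∈ interior domp, ∀ z ∈ domd, ∀ z' ∈ interior domd,
      ((1 - e₁)/(2*τ)) * (np (x - x'))^2 + ((1 - e₂)/(2*σ)) * (nd (z - z'))^2
          ≤ dpm τ σ 1 φp gp φd gd A x z x' z' ∧
      ((1 - e₁)/(2*τ)) * (np (x - x'))^2 + ((1 - e₂)/(2*σ)) * (nd (z - z'))^2
          ≤ dpm τ σ (-1) φp gp φd gd A x z x' z' := by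
    intro e₁ e₂ he₁ he₂ hs x hx x' hx' z hz z' hz'
    set a := np (x - x') with ha'
    set b := nd (z - z') with hb'
    have ha : 0 ≤ a := hnp _
    have hb : 0 ≤ b := hnd _
    have h1 := hscp x hx x' hx'
    have h2 := hscd z hz z' hz'
    have hip := hA (x - x') (z - z')
    have hab : nA * a * b ≤ (e₁/(2*τ)) * a^2 + (e₂/(2*σ)) * b^2 := by
      have h2 : 2*(σ*τ*nA)*(a*b) ≤ (σ*e₁)*a^2 + (τ*e₂)*b^2 :=
        amgm_aux (σ*e₁) (τ*e₂) (σ*τ*nA) a b (by positivity) (mul_nonneg ha hb)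
          (by nlinarith [mul_le_mul_of_nonneg_left hs (le_of_lt (mul_pos hσ hτ))])
      rw [← sub_nonneg]
      have heq : (e₁/(2*τ)) * a^2 + (e₂/(2*σ)) * b^2 - nA * a * b
          = ((σ*e₁)*a^2 + (τ*e₂)*b^2 - 2*(σ*τ*nA)*(a*b)) / (2*σ*τ) := by
        field_simp
      rw [heq]
      exact div_nonneg (by linarith) (by positivity)
    have hIl : -(nA * a * b) ≤ ⟪z - z', A (x - x')⟫ := by
      have := abs_le.mp hip
      linarith [this.1]
    have hIr : ⟪z - z', A (x - x')⟫ ≤ nA * a * b := by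
      have := abs_le.mp hip
      linarith [this.2]
    have hτ' : (0:ℝ) < 1/τ := by positivity
    have hσ' : (0:ℝ) < 1/σ := by positivity
    have hB1 : (1/τ) * ((1/2) * a^2) ≤ (1/τ) * breg φp gp x x' :=
      mul_le_mul_of_nonneg_left h1 (le_of_lt hτ')
    have hB2 : (1/σ) * ((1/2) * b^2) ≤ (1/σ) * breg φd gd z z' :=
      mul_le_mul_of_nonneg_left h2 (le_of_lt hσ')
    constructor
    · simp only [dpm]
      have : ((1 - e₁)/(2*τ)) * a^2 + ((1 - e₂)/(2*σ)) * b^2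
          = (1/τ) * ((1/2) * a^2) + (1/σ) * ((1/2) * b^2)
            - ((e₁/(2*τ)) * a^2 + (e₂/(2*σ)) * b^2) := by
        field_simp; ring
      rw [this]
      have : (1:ℝ) * ⟪z - z', A (x - x')⟫ = ⟪z - z', A (x - x')⟫ := one_mul _
      rw [this]
      linarith
    · simp only [dpm]
      have : ((1 - e₁)/(2*τ)) * a^2 + ((1 - e₂)/(2*σ)) * b^2
          = (1/τ) * ((1/2) * a^2) + (1/σ) * ((1/2) * b^2)
            - ((e₁/(2*τ)) * a^2 + (e₂/(2*σ)) * b^2) := by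
        field_simp; ring
      rw [this]
      have hneg : (-1:ℝ) * ⟪z - z', A (x - x')⟫ = -⟪z - z', A (x - x')⟫ := by ring
      rw [hneg]
      linarith
  refine ⟨key δ₁ δ₂ hδ₁ hδ₂ hstep, ?_, ?_⟩
  · intro h1 x hx x' hx' z hz z' hz'
    have := key 1 1 one_pos one_pos (by linarith) x hx x' hx' z hz z' hz'
    constructor
    · have h := this.1
      have ha : 0 ≤ (np (x - x'))^2 := sq_nonneg _
      have hb : 0 ≤ (nd (z - z'))^2 := sq_nonneg _
      simp at h
      linarith [h]
    · have h := this.2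
      simp at h
      linarith [h]
  · intro hlt
    set t := σ * τ * nA^2 with ht'
    have ht0 : 0 ≤ t := by positivity
    set δ : ℝ := max (Real.sqrt t) (1/2) with hδ'
    have hδpos : 0 < δ := lt_of_lt_of_le (by norm_num) (le_max_right _ _)
    have hδlt : δ < 1 := by
      apply max_lt ?_ (by norm_num)
      have : Real.sqrt t < Real.sqrt 1 := by
        apply Real.sqrt_lt_sqrt ht0 hlt
      simpa using this
    have hδsq : t ≤ δ * δ := by
      have h1 : Real.sqrt t ≤ δ := le_max_left _ _
      have := Real.sqrt_nonneg t
      nlinarith [Real.sq_sqrt ht0]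
    have h1δ : (0:ℝ) < 1 - δ := by linarith
    set c : ℝ := min ((1 - δ)/(2*τ)) ((1 - δ)/(2*σ)) with hc'
    have hcpos : 0 < c := lt_min (div_pos h1δ (by linarith)) (div_pos h1δ (by linarith))
    refine ⟨c, hcpos, ?_⟩
    intro x hx x' hx' z hz z' hz'
    have hk := key δ δ hδpos hδpos hδsq x hx x' hx' z hz z' hz'
    have hle : c * ((np (x - x'))^2 + (nd (z - z'))^2)
        ≤ ((1 - δ)/(2*τ)) * (np (x - x'))^2 + ((1 - δ)/(2*σ)) * (nd (z - z'))^2 := by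
      rw [mul_add]
      exact add_le_add (mul_le_mul_of_nonneg_right (min_le_left _ _) (sq_nonneg _))
        (mul_le_mul_of_nonneg_right (min_le_right _ _) (sq_nonneg _))
    exact ⟨le_trans hle hk.1, le_trans hle hk.2⟩
end

section
/- Let h : ℝⁿ → ℝ be convex and differentiable with D_h(x,x') ≤ L·d_p(x,x') for all admissible (x,x') (relative smoothness with constant L > 0), and let σ, τ > 0. Then for any δ₁, δ₂ > 0 with στ‖A‖² ≤ δ₁δ₂, the distances d_pcv := d_− − D_h and d_dcv := d_+ − D_h satisfy d_pcv(x,z;x',z') ≥ ((1 − τL − δ₁)/τ) d_p(x,x') + ((1 − δ₂)/σ) d_d(z,z'), and the same lower bound holds for d_dcv. In particular, if στ‖A‖² + τL ≤ 1 then d_pcv and d_dcv are nonnegative (the kernels φ_pcv = φ_− − h and φ_dcv = φ_+ − h are convex), and if στ‖A‖² + τL < 1 they are bounded below by positive multiples of d_p(x,x') and d_d(z,z'). -/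
open scoped RealInnerProductSpace

lemma young_aux {α β nA a b : ℝ} (hα : 0 ≤ α) (hβ : 0 ≤ β) (hnA : 0 ≤ nA)
    (ha : 0 ≤ a) (hb : 0 ≤ b) (hab : nA^2 ≤ α*β) :
    2*(nA*a*b) ≤ α*a^2 + β*b^2 := by
  have h1 : nA ≤ Real.sqrt α * Real.sqrt β := by
    rw [← Real.sqrt_mul hα]
    exact (Real.le_sqrt hnA (mul_nonneg hα hβ)).2 hab
  have h2 : Real.sqrt α ^ 2 = α := Real.sq_sqrt hα
  have h3 : Real.sqrt β ^ 2 = β := Real.sq_sqrt hβ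
  nlinarith [sq_nonneg (Real.sqrt α * a - Real.sqrt β * b), mul_nonneg ha hb]

lemma core_aux {δ₁ δ₂ τ σ L nA a b Bp Bd Bh I s : ℝ}
    (hτ : 0 < τ) (hσ : 0 < σ) (hδ₁ : 0 ≤ δ₁) (hδ₂ : 0 ≤ δ₂) (hnA : 0 ≤ nA)
    (ha : 0 ≤ a) (hb : 0 ≤ b) (hab : σ*τ*nA^2 ≤ δ₁*δ₂)
    (hBp : (1/2)*a^2 ≤ Bp) (hBd : (1/2)*b^2 ≤ Bd) (hBh : Bh ≤ L*Bp)
    (hI : |I| ≤ nA*a*b) (hs : |s| = 1) :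
    (1-τ*L-δ₁)/τ * Bp + (1-δ₂)/σ * Bd ≤ (1/τ)*Bp + (1/σ)*Bd + s*I - Bh := by
  have hsI : -(nA*a*b) ≤ s*I := by
    have : |s*I| ≤ nA*a*b := by rw [abs_mul, hs, one_mul]; exact hI
    linarith [neg_abs_le (s*I), (abs_le.1 this).1]
  have hab' : nA^2 ≤ (δ₁/τ)*(δ₂/σ) := by
    rw [div_mul_div_comm]
    rw [le_div_iff₀ (by positivity)]
    nlinarith
  have young := young_aux (by positivity) (by positivity) hnA ha hb hab'
  have h1 : (δ₁/τ)*((1/2)*a^2) ≤ (δ₁/τ)*Bp :=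
    mul_le_mul_of_nonneg_left hBp (by positivity)
  have h2 : (δ₂/σ)*((1/2)*b^2) ≤ (δ₂/σ)*Bd :=
    mul_le_mul_of_nonneg_left hBd (by positivity)
  have e1 : (1-τ*L-δ₁)/τ * Bp = (1/τ)*Bp - L*Bp - (δ₁/τ)*Bp := by
    field_simp
  have e2 : (1-δ₂)/σ * Bd = (1/σ)*Bd - (δ₂/σ)*Bd := by
    field_simp
  rw [e1, e2]
  nlinarith [h1, h2, young, hsI, hBh]

theorem stmt3 {n m : ℕ}
    (φp : EuclideanSpace ℝ (Fin n) → ℝ)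
    (gp : EuclideanSpace ℝ (Fin n) → EuclideanSpace ℝ (Fin n))
    (domp : Set (EuclideanSpace ℝ (Fin n)))
    (hpconv : ConvexOn ℝ domp φp)
    (hgp : ∀ u ∈ interior domp, HasGradientAt φp (gp u) u)
    (φd : EuclideanSpace ℝ (Fin m) → ℝ)
    (gd : EuclideanSpace ℝ (Fin m) → EuclideanSpace ℝ (Fin m))
    (domd : Set (EuclideanSpace ℝ (Fin m)))
    (hdconv : ConvexOn ℝ domd φd)
    (hgd : ∀ u ∈ interior domd, HasGradientAt φd (gd u) u)
    (h : EuclideanSpace ℝ (Fin n) → ℝ)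
    (gh : EuclideanSpace ℝ (Fin n) → EuclideanSpace ℝ (Fin n))
    (hhconv : ConvexOn ℝ Set.univ h)
    (hhgrad : ∀ x, HasGradientAt h (gh x) x)
    (L : ℝ) (hL : 0 < L)
    (hrel : ∀ x ∈ domp, ∀ x' ∈ interior domp,
      breg h gh x x' ≤ L * breg φp gp x x')
    (np : EuclideanSpace ℝ (Fin n) → ℝ) (nd : EuclideanSpace ℝ (Fin m) → ℝ)
    (hnp : ∀ u, 0 ≤ np u) (hnd : ∀ v, 0 ≤ nd v)
    (A : EuclideanSpace ℝ (Fin n) →L[ℝ] EuclideanSpace ℝ (Fin m))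
    (nA : ℝ) (hnA : 0 ≤ nA)
    (hA : ∀ u v, |⟪v, A u⟫| ≤ nA * np u * nd v)
    (hscp : ∀ x ∈ domp, ∀ x' ∈ interior domp,
      (1/2) * (np (x - x'))^2 ≤ breg φp gp x x')
    (hscd : ∀ z ∈ domd, ∀ z' ∈ interior domd,
      (1/2) * (nd (z - z'))^2 ≤ breg φd gd z z')
    (σ τ : ℝ) (hσ : 0 < σ) (hτ : 0 < τ) :
    (∀ δ₁ δ₂ : ℝ, 0 < δ₁ → 0 < δ₂ → σ * τ * nA^2 ≤ δ₁ * δ₂ →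
      ∀ x ∈ domp, ∀ x' ∈ interior domp, ∀ z ∈ domd, ∀ z' ∈ interior domd,
        ((1 - τ*L - δ₁)/τ) * breg φp gp x x' + ((1 - δ₂)/σ) * breg φd gd z z'
            ≤ dpm τ σ (-1) φp gp φd gd A x z x' z' - breg h gh x x' ∧
        ((1 - τ*L - δ₁)/τ) * breg φp gp x x' + ((1 - δ₂)/σ) * breg φd gd z z'
            ≤ dpm τ σ 1 φp gp φd gd A x z x' z' - breg h gh x x') ∧
    (σ * τ * nA^2 + τ * L ≤ 1 →
      ∀ x ∈ domp, ∀ x' ∈ interior domp, ∀ z ∈ domd, ∀ z' ∈ interior domd,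
        0 ≤ dpm τ σ (-1) φp gp φd gd A x z x' z' - breg h gh x x' ∧
        0 ≤ dpm τ σ 1 φp gp φd gd A x z x' z' - breg h gh x x') ∧
    (σ * τ * nA^2 + τ * L < 1 →
      ∃ c₁ > 0, ∃ c₂ > 0,
        ∀ x ∈ domp, ∀ x' ∈ interior domp, ∀ z ∈ domd, ∀ z' ∈ interior domd,
          c₁ * breg φp gp x x' + c₂ * breg φd gd z z'
              ≤ dpm τ σ (-1) φp gp φd gd A x z x' z' - breg h gh x x' ∧
          c₁ * breg φp gp x x' + c₂ * breg φd gd z z'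
              ≤ dpm τ σ 1 φp gp φd gd A x z x' z' - breg h gh x x') := by
  have main : ∀ δ₁ δ₂ : ℝ, 0 ≤ δ₁ → 0 ≤ δ₂ → σ * τ * nA^2 ≤ δ₁ * δ₂ →
      ∀ x ∈ domp, ∀ x' ∈ interior domp, ∀ z ∈ domd, ∀ z' ∈ interior domd,
        ((1 - τ*L - δ₁)/τ) * breg φp gp x x' + ((1 - δ₂)/σ) * breg φd gd z z'
            ≤ dpm τ σ (-1) φp gp φd gd A x z x' z' - breg h gh x x' ∧
        ((1 - τ*L - δ₁)/τ) * breg φp gp x x' + ((1 - δ₂)/σ) * breg φd gd z z'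
            ≤ dpm τ σ 1 φp gp φd gd A x z x' z' - breg h gh x x' := by
    intro δ₁ δ₂ hδ₁ hδ₂ hab x hx x' hx' z hz z' hz'
    have ha := hnp (x - x')
    have hb := hnd (z - z')
    have hBp := hscp x hx x' hx'
    have hBd := hscd z hz z' hz'
    have hBh := hrel x hx x' hx'
    have hI : |⟪z - z', A (x - x')⟫| ≤ nA * np (x - x') * nd (z - z') := hA _ _
    constructor
    · have := core_aux (a := np (x - x')) (b := nd (z - z'))
        (I := ⟪z - z', A (x - x')⟫) (s := (-1:ℝ))
        hτ hσ hδ₁ hδ₂ hnA ha hb hab hBp hBd hBh hI (by norm_num)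
      simpa [dpm] using this
    · have := core_aux (a := np (x - x')) (b := nd (z - z'))
        (I := ⟪z - z', A (x - x')⟫) (s := (1:ℝ))
        hτ hσ hδ₁ hδ₂ hnA ha hb hab hBp hBd hBh hI (by norm_num)
      simpa [dpm] using this
  refine ⟨fun δ₁ δ₂ h1 h2 h3 => main δ₁ δ₂ h1.le h2.le h3, ?_, ?_⟩
  · intro hle x hx x' hx' z hz z' hz'
    have hδ₁ : 0 ≤ 1 - τ*L := by nlinarith [sq_nonneg nA, mul_pos hσ hτ]
    have := main (1 - τ*L) 1 hδ₁ zero_le_one (by nlinarith) x hx x' hx' z hz z' hz'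
    constructor
    · have h1 := this.1
      have : ((1 - τ*L - (1 - τ*L))/τ) * breg φp gp x x'
          + ((1 - 1)/σ) * breg φd gd z z' = 0 := by ring
      linarith [this ▸ h1]
    · have h1 := this.2
      have : ((1 - τ*L - (1 - τ*L))/τ) * breg φp gp x x'
          + ((1 - 1)/σ) * breg φd gd z z' = 0 := by ring
      linarith [this ▸ h1]
  · intro hlt
    set t := σ * τ * nA^2 with ht
    have htnn : 0 ≤ t := by positivity
    have htlt : t < 1 - τ*L := by linarith
    set δ₁ := (t + (1 - τ*L))/2 with hδ₁def
    have hδ₁pos : 0 < δ₁ := by simp only [hδ₁def]; linarith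
    have htδ₁ : t < δ₁ := by simp only [hδ₁def]; linarith
    set δ₂ := max (t/δ₁) (1/2) with hδ₂def
    have hδ₂pos : 0 < δ₂ := lt_max_of_lt_right (by norm_num)
    have hδ₂lt : δ₂ < 1 := by
      apply max_lt _ (by norm_num)
      rw [div_lt_one hδ₁pos]; exact htδ₁
    have hprod : t ≤ δ₁ * δ₂ := by
      calc t = δ₁ * (t/δ₁) := by field_simp
      _ ≤ δ₁ * δ₂ := mul_le_mul_of_nonneg_left (le_max_left _ _) hδ₁pos.le
    refine ⟨(1 - τ*L - δ₁)/τ, by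
        apply div_pos _ hτ
        simp only [hδ₁def]; linarith, (1 - δ₂)/σ, by
        apply div_pos _ hσ; linarith, ?_⟩
    intro x hx x' hx' z hz z' hz'
    exact main δ₁ δ₂ hδ₁pos.le hδ₂pos.le hprod x hx x' hx' z hz z' hz'
end

section
/- (One-iteration inequality for the Bregman primal Condat–Vũ algorithm.) Let x⁰ ∈ interior(dom φ_p), z⁰ ∈ interior(dom φ_d), and suppose x¹ ∈ interior(dom φ_p) and z¹ ∈ interior(dom φ_d) satisfy the Bregman prox optimality inequalities: (i) τ(f(x¹) − f(x)) ≤ d_p(x,x⁰) − d_p(x¹,x⁰) − d_p(x,x¹) + τ⟨Aᵀz⁰ + ∇h(x⁰), x − x¹⟩ for all x ∈ dom f ∩ dom φ_p, and (ii) σ(g*(z¹) − g*(z)) ≤ d_d(z,z⁰) − d_d(z¹,z⁰) − d_d(z,z¹) − σ⟨z − z¹, A(2x¹ − x⁰)⟩ for all z ∈ dom g* ∩ dom φ_d. Then for all x ∈ dom f ∩ dom φ_p and z ∈ dom g* ∩ dom φ_d: 𝓛(x¹, z) − 𝓛(x, z¹) ≤ d_−(x,z;x⁰,z⁰) − d_−(x,z;x¹,z¹)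 − d_pcv(x¹,z¹;x⁰,z⁰). -/
/-!
The gap of the Lagrangian splits into its `f`, `g*`, `h` and coupling parts. The two prox
inequalities bound the `f` and `g*` parts by the Bregman three-point combinations that appear in
`d₋`, convexity of `h` bounds `h x¹ - h x` by `D_h(x¹, x⁰) + ⟪∇h(x⁰), x¹ - x⟫`, and with the
extrapolated point `2x¹ - x⁰` of the dual step the remaining bilinear terms telescope exactly into
the coupling terms of `d₋(x, z; x⁰, z⁰) - d₋(x, z; x¹, z¹) - d₋(x¹, z¹; x⁰, z⁰)`.
-/

open scoped RealInnerProductSpace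

section Bregman

variable {V : Type*} [NormedAddCommGroup V] [InnerProductSpace ℝ V]

theorem ConvexOn.add_inner_le_of_hasGradientAt [CompleteSpace V] {s : Set V} {φ : V → ℝ}
    {x x' g : V} (hφ : ConvexOn ℝ s φ) (hx : x ∈ s) (hx' : x' ∈ s)
    (hg : HasGradientAt φ g x') :
    φ x' + ⟪g, x - x'⟫ ≤ φ x := by
  set ℓ : ℝ →ᵃ[ℝ] V := AffineMap.lineMap x' x
  have hline : ConvexOn ℝ (Set.Icc 0 1) (φ ∘ ℓ) :=
    (hφ.comp_affineMap ℓ).subset (fun _ ht => hφ.1.lineMap_mem hx' hx ht) (convex_Icc 0 1)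
  have hderiv : HasDerivAt (φ ∘ ℓ) ⟪g, x - x'⟫ 0 := by
    simpa using hg.hasFDerivAt.comp_hasDerivAt_of_eq (0 : ℝ) AffineMap.hasDerivAt_lineMap (by simp)
  have hslope := hline.le_slope_of_hasDerivAt (by simp) (by simp) one_pos hderiv
  simp only [slope_def_field, Function.comp_apply, sub_zero, div_one, ℓ,
    AffineMap.lineMap_apply_zero, AffineMap.lineMap_apply_one] at hslope
  linarith

theorem breg_nonneg_of_convexOn [CompleteSpace V] {s : Set V} {φ : V → ℝ} {g : V → V}
    {x x' : V} (hφ : ConvexOn ℝ s φ) (hx : x ∈ s) (hx' : x' ∈ s)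
    (hg : HasGradientAt φ (g x') x') :
    0 ≤ breg φ g x x' := by
  have := hφ.add_inner_le_of_hasGradientAt hx hx' hg
  unfold breg
  linarith

theorem breg_sub_breg (φ : V → ℝ) (g : V → V) (x y x' : V) :
    breg φ g x x' - breg φ g y x' = φ x - φ y - ⟪g x', x - y⟫ := by
  simp only [breg, ← sub_sub_sub_cancel_right x y x', inner_sub_right]
  ring

end Bregman

section PrimalDual

variable {V W : Type*} [NormedAddCommGroup V] [InnerProductSpace ℝ V]
  [NormedAddCommGroup W] [InnerProductSpace ℝ W]

theorem dpm_neg_one_sub_sub (τ σ : ℝ) (φp : V → ℝ) (gp : V → V) (φd : W → ℝ) (gd : W → W)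
    (A : V →L[ℝ] W) (x x0 x1 : V) (z z0 z1 : W) :
    dpm τ σ (-1) φp gp φd gd A x z x0 z0 - dpm τ σ (-1) φp gp φd gd A x z x1 z1
        - dpm τ σ (-1) φp gp φd gd A x1 z1 x0 z0 =
      (breg φp gp x x0 - breg φp gp x1 x0 - breg φp gp x x1) / τ
        + (breg φd gd z z0 - breg φd gd z1 z0 - breg φd gd z z1) / σ
        - ⟪z - z0, A (x - x0)⟫ + ⟪z - z1, A (x - x1)⟫ + ⟪z1 - z0, A (x1 - x0)⟫ := by
  simp only [dpm]
  ring

theorem inner_apply_extrapolation (A : V →L[ℝ] W) (x x0 x1 : V) (z z0 z1 : W) :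
    ⟪z, A x1⟫ - ⟪z1, A x⟫ + ⟪z0, A (x - x1)⟫ - ⟪z - z1, A ((2 : ℝ) • x1 - x0)⟫ =
      -⟪z - z0, A (x - x0)⟫ + ⟪z - z1, A (x - x1)⟫ + ⟪z1 - z0, A (x1 - x0)⟫ := by
  simp only [map_sub, map_smul, inner_sub_left, inner_sub_right, inner_smul_right]
  ring

end PrimalDual

theorem stmt4_general {n m : ℕ}
    (f : EuclideanSpace ℝ (Fin n) → ℝ) (domf : Set (EuclideanSpace ℝ (Fin n)))
    (gs : EuclideanSpace ℝ (Fin m) → ℝ) (domgs : Set (EuclideanSpace ℝ (Fin m)))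
    (h : EuclideanSpace ℝ (Fin n) → ℝ)
    (gh : EuclideanSpace ℝ (Fin n) → EuclideanSpace ℝ (Fin n))
    (hhconv : ConvexOn ℝ Set.univ h)
    (hhgrad : ∀ x, HasGradientAt h (gh x) x)
    (A : EuclideanSpace ℝ (Fin n) →L[ℝ] EuclideanSpace ℝ (Fin m))
    (φp : EuclideanSpace ℝ (Fin n) → ℝ)
    (gp : EuclideanSpace ℝ (Fin n) → EuclideanSpace ℝ (Fin n))
    (domp : Set (EuclideanSpace ℝ (Fin n)))
    (φd : EuclideanSpace ℝ (Fin m) → ℝ)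
    (gd : EuclideanSpace ℝ (Fin m) → EuclideanSpace ℝ (Fin m))
    (domd : Set (EuclideanSpace ℝ (Fin m)))
    (σ τ : ℝ) (hσ : 0 < σ) (hτ : 0 < τ)
    (x0 x1 : EuclideanSpace ℝ (Fin n)) (z0 z1 : EuclideanSpace ℝ (Fin m))
    -- (i) optimality of the primal Bregman prox step
    (hprimal : ∀ x ∈ domf ∩ domp,
      τ * (f x1 - f x) ≤
        breg φp gp x x0 - breg φp gp x1 x0 - breg φp gp x x1
          + τ * ⟪(ContinuousLinearMap.adjoint A) z0 + gh x0, x - x1⟫)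
    -- (ii) optimality of the dual Bregman prox step
    (hdual : ∀ z ∈ domgs ∩ domd,
      σ * (gs z1 - gs z) ≤
        breg φd gd z z0 - breg φd gd z1 z0 - breg φd gd z z1
          - σ * ⟪z - z1, A ((2:ℝ) • x1 - x0)⟫) :
    ∀ x ∈ domf ∩ domp, ∀ z ∈ domgs ∩ domd,
      (f x1 + h x1 + ⟪z, A x1⟫ - gs z) - (f x + h x + ⟪z1, A x⟫ - gs z1) ≤
        dpm τ σ (-1) φp gp φd gd A x z x0 z0
          - dpm τ σ (-1) φp gp φd gd A x z x1 z1
          - (dpm τ σ (-1) φp gp φd gd A x1 z1 x0 z0 - breg h gh x1 x0) := by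
  intro x hx z hz
  have hP : f x1 - f x - ⟪(ContinuousLinearMap.adjoint A) z0 + gh x0, x - x1⟫ ≤
      (breg φp gp x x0 - breg φp gp x1 x0 - breg φp gp x x1) / τ :=
    (le_div_iff₀' hτ).2 (by linarith [hprimal x hx])
  have hD : gs z1 - gs z + ⟪z - z1, A ((2:ℝ) • x1 - x0)⟫ ≤
      (breg φd gd z z0 - breg φd gd z1 z0 - breg φd gd z z1) / σ :=
    (le_div_iff₀' hσ).2 (by linarith [hdual z hz])
  have hH : 0 ≤ breg h gh x x0 :=
    breg_nonneg_of_convexOn hhconv (Set.mem_univ x) (Set.mem_univ x0) (hhgrad x0)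
  rw [inner_add_left, ContinuousLinearMap.adjoint_inner_left] at hP
  linarith [dpm_neg_one_sub_sub τ σ φp gp φd gd A x x0 x1 z z0 z1,
    breg_sub_breg h gh x x1 x0, inner_apply_extrapolation A x x0 x1 z z0 z1]

theorem stmt4 {n m : ℕ}
    (f : EuclideanSpace ℝ (Fin n) → ℝ) (domf : Set (EuclideanSpace ℝ (Fin n)))
    (hf : ConvexOn ℝ domf f)
    (gs : EuclideanSpace ℝ (Fin m) → ℝ) (domgs : Set (EuclideanSpace ℝ (Fin m)))
    (hgs : ConvexOn ℝ domgs gs)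
    (h : EuclideanSpace ℝ (Fin n) → ℝ)
    (gh : EuclideanSpace ℝ (Fin n) → EuclideanSpace ℝ (Fin n))
    (hhconv : ConvexOn ℝ Set.univ h)
    (hhgrad : ∀ x, HasGradientAt h (gh x) x)
    (A : EuclideanSpace ℝ (Fin n) →L[ℝ] EuclideanSpace ℝ (Fin m))
    (φp : EuclideanSpace ℝ (Fin n) → ℝ)
    (gp : EuclideanSpace ℝ (Fin n) → EuclideanSpace ℝ (Fin n))
    (domp : Set (EuclideanSpace ℝ (Fin n)))
    (hpconv : ConvexOn ℝ domp φp)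
    (hgp : ∀ u ∈ interior domp, HasGradientAt φp (gp u) u)
    (φd : EuclideanSpace ℝ (Fin m) → ℝ)
    (gd : EuclideanSpace ℝ (Fin m) → EuclideanSpace ℝ (Fin m))
    (domd : Set (EuclideanSpace ℝ (Fin m)))
    (hdconv : ConvexOn ℝ domd φd)
    (hgd : ∀ u ∈ interior domd, HasGradientAt φd (gd u) u)
    (σ τ : ℝ) (hσ : 0 < σ) (hτ : 0 < τ)
    (x0 x1 : EuclideanSpace ℝ (Fin n)) (z0 z1 : EuclideanSpace ℝ (Fin m))
    (hx0 : x0 ∈ interior domp) (hz0 : z0 ∈ interior domd)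
    (hx1 : x1 ∈ interior domp) (hz1 : z1 ∈ interior domd)
    (hx1f : x1 ∈ domf) (hz1g : z1 ∈ domgs)
    -- (i) optimality of the primal Bregman prox step
    (hprimal : ∀ x ∈ domf ∩ domp,
      τ * (f x1 - f x) ≤
        breg φp gp x x0 - breg φp gp x1 x0 - breg φp gp x x1
          + τ * ⟪(ContinuousLinearMap.adjoint A) z0 + gh x0, x - x1⟫)
    -- (ii) optimality of the dual Bregman prox step
    (hdual : ∀ z ∈ domgs ∩ domd,
      σ * (gs z1 - gs z) ≤
        breg φd gd z z0 - breg φd gd z1 z0 - breg φd gd z z1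
          - σ * ⟪z - z1, A ((2:ℝ) • x1 - x0)⟫) :
    ∀ x ∈ domf ∩ domp, ∀ z ∈ domgs ∩ domd,
      (f x1 + h x1 + ⟪z, A x1⟫ - gs z) - (f x + h x + ⟪z1, A x⟫ - gs z1) ≤
        dpm τ σ (-1) φp gp φd gd A x z x0 z0
          - dpm τ σ (-1) φp gp φd gd A x z x1 z1
          - (dpm τ σ (-1) φp gp φd gd A x1 z1 x0 z0 - breg h gh x1 x0) :=
  stmt4_general f domf gs domgs h gh hhconv hhgrad A φp gp domp φd gd domd σ τ hσ hτ x0 x1 z0 z1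
    hprimal hdual
end

section
/- (One-iteration inequality for the Bregman dual Condat–Vũ algorithm.) Let x⁰ ∈ interior(dom φ_p), z⁰ ∈ interior(dom φ_d), and suppose z¹ ∈ interior(dom φ_d) and x¹ ∈ interior(dom φ_p) satisfy: (i) σ(g*(z¹) − g*(z)) ≤ d_d(z,z⁰) − d_d(z¹,z⁰) − d_d(z,z¹) − σ⟨z − z¹, Ax⁰⟩ for all z ∈ dom g* ∩ dom φ_d, and (ii) τ(f(x¹) − f(x)) ≤ d_p(x,x⁰) − d_p(x¹,x⁰) − d_p(x,x¹) + τ⟨Aᵀ(2z¹ − z⁰) + ∇h(x⁰), x − x¹⟩ for all x ∈ dom f ∩ dom φ_p. Then for all x ∈ dom f ∩ dom φ_p and z ∈ dom g* ∩ dom φ_d: 𝓛(x¹, z) − 𝓛(x, z¹) ≤ d_+(x,z;x⁰,z⁰) − d_+(x,z;x¹,z¹) − d_dcv(x¹,z¹;x⁰,z⁰). -/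
open scoped RealInnerProductSpace

lemma grad_ineq_aux {E : Type*} [NormedAddCommGroup E] [InnerProductSpace ℝ E] [CompleteSpace E]
    {h : E → ℝ} (hc : ConvexOn ℝ Set.univ h) {x0 g0 : E}
    (hg : HasGradientAt h g0 x0) (x : E) :
    h x0 + ⟪g0, x - x0⟫ ≤ h x := by
  set ψ : ℝ → ℝ := h ∘ (AffineMap.lineMap x0 x : ℝ →ᵃ[ℝ] E) with hψ
  have hψc : ConvexOn ℝ Set.univ ψ := by
    have hmap := hc.comp_affineMap (AffineMap.lineMap x0 x : ℝ →ᵃ[ℝ] E)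
    simpa using hmap
  have hcurve : HasDerivAt (fun t : ℝ => (AffineMap.lineMap x0 x : ℝ →ᵃ[ℝ] E) t) (x - x0) 0 := by
    simp only [AffineMap.lineMap_apply, vsub_eq_sub, vadd_eq_add]
    simpa using ((hasDerivAt_id (0:ℝ)).smul_const (x - x0)).add_const x0
  have hd : HasDerivAt ψ ⟪g0, x - x0⟫ 0 := by
    have hat : HasFDerivAt h ((InnerProductSpace.toDual ℝ E) g0)
        ((AffineMap.lineMap x0 x : ℝ →ᵃ[ℝ] E) 0) := by
      simpa [AffineMap.lineMap_apply] using hg.hasFDerivAt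
    have h2 := hat.comp_hasDerivAt 0 hcurve
    simpa [ψ, Function.comp, InnerProductSpace.toDual_apply_apply] using h2
  have hs := hψc.le_slope_of_hasDerivAt (Set.mem_univ 0) (Set.mem_univ 1) one_pos hd
  have h1 : ψ 1 = h x := by simp [ψ, AffineMap.lineMap_apply]
  have h0 : ψ 0 = h x0 := by simp [ψ, AffineMap.lineMap_apply]
  have hsl : slope ψ 0 1 = ψ 1 - ψ 0 := by simp [slope_def_field]
  rw [hsl, h1, h0] at hs
  linarith

theorem stmt5 {n m : ℕ}
    (f : EuclideanSpace ℝ (Fin n) → ℝ) (domf : Set (EuclideanSpace ℝ (Fin n)))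
    (hf : ConvexOn ℝ domf f)
    (gs : EuclideanSpace ℝ (Fin m) → ℝ) (domgs : Set (EuclideanSpace ℝ (Fin m)))
    (hgs : ConvexOn ℝ domgs gs)
    (h : EuclideanSpace ℝ (Fin n) → ℝ)
    (gh : EuclideanSpace ℝ (Fin n) → EuclideanSpace ℝ (Fin n))
    (hhconv : ConvexOn ℝ Set.univ h)
    (hhgrad : ∀ x, HasGradientAt h (gh x) x)
    (A : EuclideanSpace ℝ (Fin n) →L[ℝ] EuclideanSpace ℝ (Fin m))
    (φp : EuclideanSpace ℝ (Fin n) → ℝ)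
    (gp : EuclideanSpace ℝ (Fin n) → EuclideanSpace ℝ (Fin n))
    (domp : Set (EuclideanSpace ℝ (Fin n)))
    (hpconv : ConvexOn ℝ domp φp)
    (hgp : ∀ u ∈ interior domp, HasGradientAt φp (gp u) u)
    (φd : EuclideanSpace ℝ (Fin m) → ℝ)
    (gd : EuclideanSpace ℝ (Fin m) → EuclideanSpace ℝ (Fin m))
    (domd : Set (EuclideanSpace ℝ (Fin m)))
    (hdconv : ConvexOn ℝ domd φd)
    (hgd : ∀ u ∈ interior domd, HasGradientAt φd (gd u) u)
    (σ τ : ℝ) (hσ : 0 < σ) (hτ : 0 < τ)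
    (x0 x1 : EuclideanSpace ℝ (Fin n)) (z0 z1 : EuclideanSpace ℝ (Fin m))
    (hx0 : x0 ∈ interior domp) (hz0 : z0 ∈ interior domd)
    (hx1 : x1 ∈ interior domp) (hz1 : z1 ∈ interior domd)
    (hx1f : x1 ∈ domf) (hz1g : z1 ∈ domgs)
    -- (ii) optimality of the primal Bregman prox step
    (hprimal : ∀ x ∈ domf ∩ domp,
      τ * (f x1 - f x) ≤
        breg φp gp x x0 - breg φp gp x1 x0 - breg φp gp x x1
          + τ * ⟪(ContinuousLinearMap.adjoint A) ((2:ℝ) • z1 - z0) + gh x0, x - x1⟫)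
    -- (ii) optimality of the dual Bregman prox step
    (hdual : ∀ z ∈ domgs ∩ domd,
      σ * (gs z1 - gs z) ≤
        breg φd gd z z0 - breg φd gd z1 z0 - breg φd gd z z1
          - σ * ⟪z - z1, A x0⟫) :
    ∀ x ∈ domf ∩ domp, ∀ z ∈ domgs ∩ domd,
      (f x1 + h x1 + ⟪z, A x1⟫ - gs z) - (f x + h x + ⟪z1, A x⟫ - gs z1) ≤
        dpm τ σ 1 φp gp φd gd A x z x0 z0
          - dpm τ σ 1 φp gp φd gd A x z x1 z1
          - (dpm τ σ 1 φp gp φd gd A x1 z1 x0 z0 - breg h gh x1 x0) := by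
  intro x hx z hz
  have hp := hprimal x hx
  have hd := hdual z hz
  have hτ' : (0:ℝ) < 1/τ := by positivity
  have hσ' : (0:ℝ) < 1/σ := by positivity
  have hp' : f x1 - f x ≤
      (1/τ) * (breg φp gp x x0 - breg φp gp x1 x0 - breg φp gp x x1)
        + ⟪(ContinuousLinearMap.adjoint A) ((2:ℝ) • z1 - z0) + gh x0, x - x1⟫ := by
    have h' := mul_le_mul_of_nonneg_left hp hτ'.le
    calc f x1 - f x = (1/τ) * (τ * (f x1 - f x)) := by field_simp
    _ ≤ (1/τ) * (breg φp gp x x0 - breg φp gp x1 x0 - breg φp gp x x1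
          + τ * ⟪(ContinuousLinearMap.adjoint A) ((2:ℝ) • z1 - z0) + gh x0, x - x1⟫) := h'
    _ = (1/τ) * (breg φp gp x x0 - breg φp gp x1 x0 - breg φp gp x x1)
          + ⟪(ContinuousLinearMap.adjoint A) ((2:ℝ) • z1 - z0) + gh x0, x - x1⟫ := by
        field_simp
  have hd' : gs z1 - gs z ≤
      (1/σ) * (breg φd gd z z0 - breg φd gd z1 z0 - breg φd gd z z1) - ⟪z - z1, A x0⟫ := by
    have h' := mul_le_mul_of_nonneg_left hd hσ'.le
    calc gs z1 - gs z = (1/σ) * (σ * (gs z1 - gs z)) := by field_simp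
    _ ≤ (1/σ) * (breg φd gd z z0 - breg φd gd z1 z0 - breg φd gd z z1 - σ * ⟪z - z1, A x0⟫) := h'
    _ = (1/σ) * (breg φd gd z z0 - breg φd gd z1 z0 - breg φd gd z z1) - ⟪z - z1, A x0⟫ := by
        field_simp
  have hh' : h x0 + ⟪gh x0, x - x0⟫ ≤ h x := grad_ineq_aux hhconv (hhgrad x0) x
  simp only [dpm, breg] at hp' hd' ⊢
  simp only [inner_sub_left, inner_sub_right, inner_add_left, inner_add_right,
    real_inner_smul_left, map_sub, ContinuousLinearMap.adjoint_inner_left] at hp' hd' hh' ⊢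
  ring_nf at hp' hd' hh' ⊢
  linarith [hp', hd', hh']
end

section
/- (Ergodic convergence of the Bregman Condat–Vũ algorithms.) Suppose στ‖A‖² ≤ 1 and let d be either d_− or d_+. Let (x⁽ⁱ⁾, z⁽ⁱ⁾), i = 0, …, k, be points with x⁽ⁱ⁾ ∈ dom f ∩ interior(dom φ_p) and z⁽ⁱ⁾ ∈ dom g* ∩ interior(dom φ_d) such that 𝓛(x⁽ⁱ⁺¹⁾, z) − 𝓛(x, z⁽ⁱ⁺¹⁾) ≤ d(x,z;x⁽ⁱ⁾,z⁽ⁱ⁾) − d(x,z;x⁽ⁱ⁺¹⁾,z⁽ⁱ⁺¹⁾) for all i = 0, …, k−1, all x ∈ dom f ∩ dom φ_p, and all z ∈ dom g* ∩ dom φ_d. Define x_avg = (1/k)∑_{i=1}^k x⁽ⁱ⁾ and z_avg = (1/k)∑_{i=1}^k z⁽ⁱ⁾. Then for all such x and z: 𝓛(x_avg, z) − 𝓛(x, z_avg) ≤ (2/k)·((1/τ) d_p(x, x⁽⁰⁾) + (1/σ) d_d(z, z⁽⁰⁾)). -/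
open scoped RealInnerProductSpace

lemma amgm_aux_s6 (σ τ nA a b : ℝ) (hσ : 0 < σ) (hτ : 0 < τ) (hnA : 0 ≤ nA)
    (hstep : σ * τ * nA^2 ≤ 1) (ha : 0 ≤ a) (hb : 0 ≤ b) :
    nA * a * b ≤ (1/τ) * ((1/2) * a^2) + (1/σ) * ((1/2) * b^2) := by
  rw [show (1/τ) * ((1/2) * a^2) + (1/σ) * ((1/2) * b^2)
      = (σ * a^2 + τ * b^2) / (2 * (σ * τ)) by field_simp]
  rw [le_div_iff₀ (by positivity)]
  have h1 : σ * τ * nA^2 * (4*σ*τ*a^2*b^2) ≤ 1 * (4*σ*τ*a^2*b^2) :=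
    mul_le_mul_of_nonneg_right hstep (by positivity)
  have hX : 0 ≤ nA * a * b * (2 * (σ * τ)) := by positivity
  have hY : 0 ≤ σ * a^2 + τ * b^2 := by positivity
  nlinarith [sq_nonneg (σ * a^2 - τ * b^2), sq_nonneg (nA * a * b * (2 * (σ * τ)) + (σ * a^2 + τ * b^2))]

theorem stmt6 {n m : ℕ}
    (f : EuclideanSpace ℝ (Fin n) → ℝ) (domf : Set (EuclideanSpace ℝ (Fin n)))
    (hf : ConvexOn ℝ domf f)
    (gs : EuclideanSpace ℝ (Fin m) → ℝ) (domgs : Set (EuclideanSpace ℝ (Fin m)))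
    (hgs : ConvexOn ℝ domgs gs)
    (h : EuclideanSpace ℝ (Fin n) → ℝ)
    (gh : EuclideanSpace ℝ (Fin n) → EuclideanSpace ℝ (Fin n))
    (hhconv : ConvexOn ℝ Set.univ h)
    (hhgrad : ∀ x, HasGradientAt h (gh x) x)
    (A : EuclideanSpace ℝ (Fin n) →L[ℝ] EuclideanSpace ℝ (Fin m))
    (φp : EuclideanSpace ℝ (Fin n) → ℝ)
    (gp : EuclideanSpace ℝ (Fin n) → EuclideanSpace ℝ (Fin n))
    (domp : Set (EuclideanSpace ℝ (Fin n)))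
    (hpconv : ConvexOn ℝ domp φp)
    (hgp : ∀ u ∈ interior domp, HasGradientAt φp (gp u) u)
    (φd : EuclideanSpace ℝ (Fin m) → ℝ)
    (gd : EuclideanSpace ℝ (Fin m) → EuclideanSpace ℝ (Fin m))
    (domd : Set (EuclideanSpace ℝ (Fin m)))
    (hdconv : ConvexOn ℝ domd φd)
    (hgd : ∀ u ∈ interior domd, HasGradientAt φd (gd u) u)
    (np : EuclideanSpace ℝ (Fin n) → ℝ) (nd : EuclideanSpace ℝ (Fin m) → ℝ)
    (hnp : ∀ u, 0 ≤ np u) (hnd : ∀ v, 0 ≤ nd v)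
    (nA : ℝ) (hnA : 0 ≤ nA)
    (hA : ∀ u v, |⟪v, A u⟫| ≤ nA * np u * nd v)
    (hscp : ∀ x ∈ domp, ∀ x' ∈ interior domp,
      (1/2) * (np (x - x'))^2 ≤ breg φp gp x x')
    (hscd : ∀ z ∈ domd, ∀ z' ∈ interior domd,
      (1/2) * (nd (z - z'))^2 ≤ breg φd gd z z')
    (σ τ : ℝ) (hσ : 0 < σ) (hτ : 0 < τ) (hstep : σ * τ * nA^2 ≤ 1)
    (s : ℝ) (hs : s = 1 ∨ s = -1)
    (k : ℕ) (hk : 0 < k)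
    (X : ℕ → EuclideanSpace ℝ (Fin n)) (Z : ℕ → EuclideanSpace ℝ (Fin m))
    (hX : ∀ i ≤ k, X i ∈ domf ∧ X i ∈ interior domp)
    (hZ : ∀ i ≤ k, Z i ∈ domgs ∧ Z i ∈ interior domd)
    (hdesc : ∀ i < k, ∀ x ∈ domf ∩ domp, ∀ z ∈ domgs ∩ domd,
      (f (X (i+1)) + h (X (i+1)) + ⟪z, A (X (i+1))⟫ - gs z)
          - (f x + h x + ⟪Z (i+1), A x⟫ - gs (Z (i+1)))
        ≤ dpm τ σ s φp gp φd gd A x z (X i) (Z i)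
            - dpm τ σ s φp gp φd gd A x z (X (i+1)) (Z (i+1))) :
    ∀ x ∈ domf ∩ domp, ∀ z ∈ domgs ∩ domd,
      ∀ xavg zavg,
        xavg = (k:ℝ)⁻¹ • ∑ i ∈ Finset.Icc 1 k, X i →
        zavg = (k:ℝ)⁻¹ • ∑ i ∈ Finset.Icc 1 k, Z i →
        (f xavg + h xavg + ⟪z, A xavg⟫ - gs z)
            - (f x + h x + ⟪zavg, A x⟫ - gs zavg)
          ≤ (2/(k:ℝ)) * ((1/τ) * breg φp gp x (X 0) + (1/σ) * breg φd gd z (Z 0)) := by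
  intro x hx z hz xavg zavg hxavg hzavg
  obtain ⟨hxf, hxp⟩ := hx
  obtain ⟨hzg, hzd⟩ := hz
  have hkR : (0:ℝ) < (k:ℝ) := Nat.cast_pos.mpr hk
  -- cross term bound
  have hcross : ∀ x' ∈ interior domp, ∀ z' ∈ interior domd,
      |⟪z - z', A (x - x')⟫| ≤ (1/τ) * breg φp gp x x' + (1/σ) * breg φd gd z z' := by
    intro x' hx' z' hz'
    calc |⟪z - z', A (x - x')⟫| ≤ nA * np (x - x') * nd (z - z') := hA _ _
      _ ≤ (1/τ) * ((1/2) * (np (x - x'))^2) + (1/σ) * ((1/2) * (nd (z - z'))^2) :=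
          amgm_aux_s6 σ τ nA _ _ hσ hτ hnA hstep (hnp _) (hnd _)
      _ ≤ (1/τ) * breg φp gp x x' + (1/σ) * breg φd gd z z' := by
          gcongr
          · exact hscp x hxp x' hx'
          · exact hscd z hzd z' hz'
  have hsabs : ∀ t : ℝ, -|t| ≤ s * t ∧ s * t ≤ |t| := by
    rcases hs with rfl | rfl <;> intro t <;>
      constructor <;> simp [neg_abs_le, le_abs_self, neg_le_abs, abs_le]
  set D : ℕ → ℝ := fun i => dpm τ σ s φp gp φd gd A x z (X i) (Z i) with hD
  have hD0 : D 0 ≤ 2 * ((1/τ) * breg φp gp x (X 0) + (1/σ) * breg φd gd z (Z 0)) := by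
    have hc := hcross (X 0) (hX 0 (Nat.zero_le k)).2 (Z 0) (hZ 0 (Nat.zero_le k)).2
    have := (hsabs (⟪z - Z 0, A (x - X 0)⟫ : ℝ)).2
    simp only [hD, dpm]
    linarith
  have hDk : 0 ≤ D k := by
    have hc := hcross (X k) (hX k le_rfl).2 (Z k) (hZ k le_rfl).2
    have := (hsabs (⟪z - Z k, A (x - X k)⟫ : ℝ)).1
    simp only [hD, dpm]
    linarith
  -- telescoping
  have tel : ∑ i ∈ Finset.range k, (D i - D (i+1)) = D 0 - D k := Finset.sum_range_sub' D k
  have hsum : ∑ i ∈ Finset.range k,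
      ((f (X (i+1)) + h (X (i+1)) + ⟪z, A (X (i+1))⟫ - gs z)
        - (f x + h x + ⟪Z (i+1), A x⟫ - gs (Z (i+1)))) ≤ D 0 - D k := by
    rw [← tel]
    refine Finset.sum_le_sum fun i hi => ?_
    simpa only [hD] using hdesc i (Finset.mem_range.mp hi) x ⟨hxf, hxp⟩ z ⟨hzg, hzd⟩
  have hsum2 : ∑ i ∈ Finset.Icc 1 k,
      ((f (X i) + h (X i) + ⟪z, A (X i)⟫ - gs z)
        - (f x + h x + ⟪Z i, A x⟫ - gs (Z i)))
      ≤ 2 * ((1/τ) * breg φp gp x (X 0) + (1/σ) * breg φd gd z (Z 0)) := by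
    have hre : ∑ i ∈ Finset.Icc 1 k,
        ((f (X i) + h (X i) + ⟪z, A (X i)⟫ - gs z)
          - (f x + h x + ⟪Z i, A x⟫ - gs (Z i)))
        = ∑ i ∈ Finset.range k,
        ((f (X (i+1)) + h (X (i+1)) + ⟪z, A (X (i+1))⟫ - gs z)
          - (f x + h x + ⟪Z (i+1), A x⟫ - gs (Z (i+1)))) := by
      rw [show Finset.Icc 1 k = Finset.Ico 1 (k+1) by rw [Finset.Ico_add_one_right_eq_Icc],
        Finset.sum_Ico_eq_sum_range]
      simp [add_comm]
    rw [hre]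
    linarith
  -- Jensen step
  have hw0 : ∀ i ∈ Finset.Icc 1 k, (0:ℝ) ≤ (k:ℝ)⁻¹ := fun i _ => by positivity
  have hw1 : ∑ _i ∈ Finset.Icc 1 k, (k:ℝ)⁻¹ = 1 := by
    rw [Finset.sum_const, Nat.card_Icc, nsmul_eq_mul]
    simp only [Nat.add_sub_cancel]
    field_simp
  have hconst : ∀ c : ℝ, ∑ _i ∈ Finset.Icc 1 k, (k:ℝ)⁻¹ * c = c := by
    intro c; rw [← Finset.sum_mul, hw1, one_mul]
  have hfav : f xavg ≤ ∑ i ∈ Finset.Icc 1 k, (k:ℝ)⁻¹ * f (X i) := by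
    rw [hxavg, Finset.smul_sum]
    simpa using hf.map_sum_le hw0 hw1 (fun i hi => (hX i (Finset.mem_Icc.mp hi).2).1)
  have hhav : h xavg ≤ ∑ i ∈ Finset.Icc 1 k, (k:ℝ)⁻¹ * h (X i) := by
    rw [hxavg, Finset.smul_sum]
    simpa using hhconv.map_sum_le hw0 hw1 (fun i _ => Set.mem_univ _)
  have hgsav : gs zavg ≤ ∑ i ∈ Finset.Icc 1 k, (k:ℝ)⁻¹ * gs (Z i) := by
    rw [hzavg, Finset.smul_sum]
    simpa using hgs.map_sum_le hw0 hw1 (fun i hi => (hZ i (Finset.mem_Icc.mp hi).2).1)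
  have hlin1 : ⟪z, A xavg⟫ = ∑ i ∈ Finset.Icc 1 k, (k:ℝ)⁻¹ * ⟪z, A (X i)⟫ := by
    rw [hxavg, map_smul, real_inner_smul_right, map_sum, inner_sum, Finset.mul_sum]
  have hlin2 : ⟪zavg, A x⟫ = ∑ i ∈ Finset.Icc 1 k, (k:ℝ)⁻¹ * ⟪Z i, A x⟫ := by
    rw [hzavg, real_inner_smul_left, sum_inner, Finset.mul_sum]
  have hGsum : ∑ i ∈ Finset.Icc 1 k, (k:ℝ)⁻¹ *
      ((f (X i) + h (X i) + ⟪z, A (X i)⟫ - gs z)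
        - (f x + h x + ⟪Z i, A x⟫ - gs (Z i)))
      = (∑ i ∈ Finset.Icc 1 k, (k:ℝ)⁻¹ * f (X i))
        + (∑ i ∈ Finset.Icc 1 k, (k:ℝ)⁻¹ * h (X i))
        + (∑ i ∈ Finset.Icc 1 k, (k:ℝ)⁻¹ * ⟪z, A (X i)⟫)
        - gs z - f x - h x
        - (∑ i ∈ Finset.Icc 1 k, (k:ℝ)⁻¹ * ⟪Z i, A x⟫)
        + (∑ i ∈ Finset.Icc 1 k, (k:ℝ)⁻¹ * gs (Z i)) := by
    calc ∑ i ∈ Finset.Icc 1 k, (k:ℝ)⁻¹ *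
        ((f (X i) + h (X i) + ⟪z, A (X i)⟫ - gs z)
          - (f x + h x + ⟪Z i, A x⟫ - gs (Z i)))
        = ∑ i ∈ Finset.Icc 1 k,
          ((k:ℝ)⁻¹ * f (X i) + (k:ℝ)⁻¹ * h (X i) + (k:ℝ)⁻¹ * ⟪z, A (X i)⟫
            - (k:ℝ)⁻¹ * gs z - (k:ℝ)⁻¹ * f x - (k:ℝ)⁻¹ * h x
            - (k:ℝ)⁻¹ * ⟪Z i, A x⟫ + (k:ℝ)⁻¹ * gs (Z i)) :=
          Finset.sum_congr rfl fun i _ => by ring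
      _ = _ := by
          simp only [Finset.sum_add_distrib, Finset.sum_sub_distrib, hconst]
  have key : (f xavg + h xavg + ⟪z, A xavg⟫ - gs z)
      - (f x + h x + ⟪zavg, A x⟫ - gs zavg)
      ≤ ∑ i ∈ Finset.Icc 1 k, (k:ℝ)⁻¹ *
      ((f (X i) + h (X i) + ⟪z, A (X i)⟫ - gs z)
        - (f x + h x + ⟪Z i, A x⟫ - gs (Z i))) := by
    rw [hGsum]
    linarith [hfav, hhav, hgsav, hlin1.le, hlin1.ge, hlin2.le, hlin2.ge]
  calc (f xavg + h xavg + ⟪z, A xavg⟫ - gs z)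
      - (f x + h x + ⟪zavg, A x⟫ - gs zavg)
      ≤ ∑ i ∈ Finset.Icc 1 k, (k:ℝ)⁻¹ *
        ((f (X i) + h (X i) + ⟪z, A (X i)⟫ - gs z)
          - (f x + h x + ⟪Z i, A x⟫ - gs (Z i))) := key
    _ = (k:ℝ)⁻¹ * ∑ i ∈ Finset.Icc 1 k,
        ((f (X i) + h (X i) + ⟪z, A (X i)⟫ - gs z)
          - (f x + h x + ⟪Z i, A x⟫ - gs (Z i))) := by rw [Finset.mul_sum]
    _ ≤ (k:ℝ)⁻¹ * (2 * ((1/τ) * breg φp gp x (X 0) + (1/σ) * breg φd gd z (Z 0))) :=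
        mul_le_mul_of_nonneg_left hsum2 (by positivity)
    _ = (2/(k:ℝ)) * ((1/τ) * breg φp gp x (X 0) + (1/σ) * breg φd gd z (Z 0)) := by
        field_simp
end

section
/- (Sufficient condition for the line-search exit test.) Let h be convex differentiable with D_h(x',x) ≤ L·d_p(x',x) for all admissible pairs (relative smoothness with constant L > 0), and let the dual distance be Euclidean. Let δ ∈ (0,1] and suppose τ, σ > 0 satisfy τσ‖A‖² + τL ≤ δ². Then for all x ∈ interior(dom φ_p), x' ∈ dom φ_p, and all z̄, z' ∈ ℝᵐ: ⟨z' − z̄, A(x' − x)⟩ + D_h(x', x) ≤ (δ²/τ) d_p(x', x) + (1/(2σ))‖z̄ − z'‖². -/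
open scoped RealInnerProductSpace

theorem stmt8 {n m : ℕ}
    (φp : EuclideanSpace ℝ (Fin n) → ℝ)
    (gp : EuclideanSpace ℝ (Fin n) → EuclideanSpace ℝ (Fin n))
    (domp : Set (EuclideanSpace ℝ (Fin n)))
    (hpconv : ConvexOn ℝ domp φp)
    (hgp : ∀ u ∈ interior domp, HasGradientAt φp (gp u) u)
    (h : EuclideanSpace ℝ (Fin n) → ℝ)
    (gh : EuclideanSpace ℝ (Fin n) → EuclideanSpace ℝ (Fin n))
    (hhconv : ConvexOn ℝ Set.univ h)
    (hhgrad : ∀ x, HasGradientAt h (gh x) x)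
    (L : ℝ) (hL : 0 < L)
    -- relative smoothness: D_h(x', x) ≤ L d_p(x', x)
    (hrel : ∀ x' ∈ domp, ∀ x ∈ interior domp,
      breg h gh x' x ≤ L * breg φp gp x' x)
    (np : EuclideanSpace ℝ (Fin n) → ℝ) (hnp : ∀ u, 0 ≤ np u)
    -- strong convexity of the primal kernel w.r.t. the norm np
    (hscp : ∀ x' ∈ domp, ∀ x ∈ interior domp,
      (1/2) * (np (x' - x))^2 ≤ breg φp gp x' x)
    (A : EuclideanSpace ℝ (Fin n) →L[ℝ] EuclideanSpace ℝ (Fin m))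
    (nA : ℝ) (hnA : 0 ≤ nA)
    (hA : ∀ u v, |⟪v, A u⟫| ≤ nA * np u * ‖v‖)
    (δ : ℝ) (hδ0 : 0 < δ) (hδ1 : δ ≤ 1)
    (σ τ : ℝ) (hσ : 0 < σ) (hτ : 0 < τ)
    (hstep : τ * σ * nA^2 + τ * L ≤ δ^2) :
    ∀ x ∈ interior domp, ∀ x' ∈ domp, ∀ zbar z' : EuclideanSpace ℝ (Fin m),
      ⟪z' - zbar, A (x' - x)⟫ + breg h gh x' x ≤
        (δ^2/τ) * breg φp gp x' x + (1/(2*σ)) * ‖zbar - z'‖^2 := by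
  intro x hx x' hx' zbar z'
  have hd : (1/2) * (np (x' - x))^2 ≤ breg φp gp x' x := hscp x' hx' x hx
  have hdnn : 0 ≤ breg φp gp x' x := le_trans (by positivity) hd
  have hrel' := hrel x' hx' x hx
  have hAuv : ⟪z' - zbar, A (x' - x)⟫ ≤ nA * np (x' - x) * ‖z' - zbar‖ :=
    le_of_abs_le (hA _ _)
  have hnorm : ‖zbar - z'‖ = ‖z' - zbar‖ := norm_sub_rev _ _
  have hyoung : nA * np (x' - x) * ‖z' - zbar‖ ≤
      σ * nA^2 * (np (x' - x))^2 / 2 + ‖z' - zbar‖^2 / (2*σ) := by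
    have hsq := sq_nonneg (σ * (nA * np (x' - x)) - ‖z' - zbar‖)
    rw [div_add_div _ _ (by norm_num : (2:ℝ) ≠ 0) (by positivity : (2:ℝ)*σ ≠ 0),
      le_div_iff₀ (by positivity : (0:ℝ) < 2 * (2*σ))]
    nlinarith
  have hcoef : σ * nA^2 + L ≤ δ^2 / τ := by
    rw [le_div_iff₀ hτ]; nlinarith
  have hbd : σ * nA^2 * (np (x' - x))^2 / 2 ≤ σ * nA^2 * breg φp gp x' x := by
    have hnn : 0 ≤ σ * nA^2 := by positivity
    nlinarith
  rw [hnorm]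
  have hfin : (σ * nA^2 + L) * breg φp gp x' x ≤ (δ^2/τ) * breg φp gp x' x :=
    mul_le_mul_of_nonneg_right hcoef hdnn
  have : ‖z' - zbar‖^2 / (2*σ) = (1/(2*σ)) * ‖z' - zbar‖^2 := by ring
  nlinarith
end

section
/- (Backtracking stepsize bound.) Let a > 0, β > 0, L ≥ 0, δ > 0, τ > 0, and θ̃ > 0. If θ̃²τ²βa² + θ̃τL > δ², then (θ̃/2)·τ > (−L + √(L² + 4δ²βa²)) / (4βa²). Consequently, in the backtracking procedure where a rejected value θ̃ is halved, the accepted stepsize τ_k = (θ̃/2)τ_{k−1} remains bounded below by (−L + √(L² + 4δ²β‖A‖²)) / (4β‖A‖²). -/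
theorem stmt9 (a β L δ τ θ : ℝ)
    (ha : 0 < a) (hβ : 0 < β) (hL : 0 ≤ L) (hδ : 0 < δ) (hτ : 0 < τ) (hθ : 0 < θ)
    -- the value θ was rejected by the backtracking test
    (hrej : θ^2 * τ^2 * β * a^2 + θ * τ * L > δ^2) :
    -- the accepted stepsize (θ/2) * τ remains bounded below
    (θ/2) * τ > (-L + Real.sqrt (L^2 + 4*δ^2*β*a^2)) / (4*β*a^2) := by
  have ha2 : 0 < β * a^2 := by positivity
  have hy : 0 < 2 * (β * a^2) * (θ * τ) + L := by positivity
  have hs : Real.sqrt (L^2 + 4*δ^2*β*a^2) < 2 * (β * a^2) * (θ * τ) + L := by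
    rw [show (2 * (β * a^2) * (θ * τ) + L) = ((2 * (β * a^2) * (θ * τ) + L)^2).sqrt by
      rw [Real.sqrt_sq hy.le]]
    apply Real.sqrt_lt_sqrt (by positivity)
    nlinarith [sq_nonneg (θ*τ), mul_nonneg (mul_pos hθ hτ).le hL]
  rw [gt_iff_lt, div_lt_iff₀ (by positivity)]
  nlinarith [hs]
end

section
/- (One-iteration inequality for the Bregman dual Condat–Vũ algorithm with line search.) Consider problem data f convex, h convex differentiable, A ∈ ℝ^{m×n}, b ∈ ℝᵐ, and 𝓛(x,z) = f(x) + h(x) + ⟨z, Ax − b⟩. Fix δ ∈ (0,1] and stepsizes τ_k, σ_k, σ_{k−1} > 0 with θ_k = σ_k/σ_{k−1}, and suppose: (i) z⁽ᵏ⁾ = z⁽ᵏ⁻¹⁾ + σ_{k−1}(Ax⁽ᵏ⁾ − b); (ii) z̄⁽ᵏ⁺¹⁾ = z⁽ᵏ⁾ + θ_k (z⁽ᵏ⁾ − z⁽ᵏ⁻¹⁾); (iii) x⁽ᵏ⁺¹⁾ satisfies the prox inequality f(x⁽ᵏ⁺¹⁾) − f(x) ≤ (1/τ_k)(d_p(x,x⁽ᵏ⁾)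 − d_p(x,x⁽ᵏ⁺¹⁾) − d_p(x⁽ᵏ⁺¹⁾,x⁽ᵏ⁾)) + ⟨Aᵀz̄⁽ᵏ⁺¹⁾ + ∇h(x⁽ᵏ⁾), x − x⁽ᵏ⁺¹⁾⟩ for all x ∈ dom f ∩ dom φ_p; (iv) z⁽ᵏ⁺¹⁾ = z⁽ᵏ⁾ + σ_k(Ax⁽ᵏ⁺¹⁾ − b); (v) the line-search condition ⟨z⁽ᵏ⁺¹⁾ − z̄⁽ᵏ⁺¹⁾, A(x⁽ᵏ⁺¹⁾ − x⁽ᵏ⁾)⟩ + D_h(x⁽ᵏ⁺¹⁾, x⁽ᵏ⁾) ≤ (δ²/τ_k) d_p(x⁽ᵏ⁺¹⁾, x⁽ᵏ⁾) + (1/(2σ_k))‖z̄⁽ᵏ⁺¹⁾ − z⁽ᵏ⁺¹⁾‖² holds. Then for all x ∈ dom f ∩ dom φ_p and all z ∈ ℝᵐ: 𝓛(x⁽ᵏ⁺¹⁾, z) − 𝓛(x, z̄⁽ᵏ⁺¹⁾) ≤ (1/τ_k)(d_p(x,x⁽ᵏ⁾) − d_p(x,x⁽ᵏ⁺¹⁾)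 − (1−δ²) d_p(x⁽ᵏ⁺¹⁾,x⁽ᵏ⁾)) + (1/(2σ_k))(‖z − z⁽ᵏ⁾‖² − ‖z − z⁽ᵏ⁺¹⁾‖² − ‖z̄⁽ᵏ⁺¹⁾ − z⁽ᵏ⁾‖²). -/
open scoped RealInnerProductSpace

lemma convex_grad_ineq {E : Type*} [NormedAddCommGroup E] [InnerProductSpace ℝ E] [CompleteSpace E]
    {h : E → ℝ} (hconv : ConvexOn ℝ Set.univ h) {y g : E} (hg : HasGradientAt h g y)
    (x : E) : h y + ⟪g, x - y⟫ ≤ h x := by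
  set c : ℝ → E := fun t => y + t • (x - y) with hc
  have hcconv : ConvexOn ℝ Set.univ (h ∘ c) := by
    have := hconv.comp_affineMap (AffineMap.lineMap y x)
    simp only [Set.preimage_univ] at this
    have he : c = ⇑(AffineMap.lineMap y x) := by
      funext t; simp [c, AffineMap.lineMap_apply]; abel
    rwa [he]
  have hcd : HasDerivAt c (x - y) 0 := by
    simpa [c] using ((hasDerivAt_id (0:ℝ)).smul_const (x - y)).const_add y
  have hc0 : c 0 = y := by simp [c]
  have hd : HasDerivAt (h ∘ c) ⟪g, x - y⟫ 0 := by
    have h1 : HasFDerivAt h ((InnerProductSpace.toDual ℝ E) g) (c 0) := hc0 ▸ hg.hasFDerivAt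
    have := h1.comp_hasDerivAt (0:ℝ) hcd
    simpa [InnerProductSpace.toDual_apply_apply] using this
  have := hcconv.le_slope_of_hasDerivAt (Set.mem_univ (0:ℝ)) (Set.mem_univ (1:ℝ))
    one_pos hd
  have hs : slope (h ∘ c) 0 1 = h x - h y := by
    simp [slope_def_field, c]
  rw [hs] at this
  linarith

theorem stmt10 {n m : ℕ}
    (f : EuclideanSpace ℝ (Fin n) → ℝ) (domf : Set (EuclideanSpace ℝ (Fin n)))
    (hf : ConvexOn ℝ domf f)
    (h : EuclideanSpace ℝ (Fin n) → ℝ)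
    (gh : EuclideanSpace ℝ (Fin n) → EuclideanSpace ℝ (Fin n))
    (hhconv : ConvexOn ℝ Set.univ h)
    (hhgrad : ∀ x, HasGradientAt h (gh x) x)
    (A : EuclideanSpace ℝ (Fin n) →L[ℝ] EuclideanSpace ℝ (Fin m))
    (b : EuclideanSpace ℝ (Fin m))
    (φp : EuclideanSpace ℝ (Fin n) → ℝ)
    (gp : EuclideanSpace ℝ (Fin n) → EuclideanSpace ℝ (Fin n))
    (domp : Set (EuclideanSpace ℝ (Fin n)))
    (hpconv : ConvexOn ℝ domp φp)
    (hgp : ∀ u ∈ interior domp, HasGradientAt φp (gp u) u)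
    (δ : ℝ) (hδ0 : 0 < δ) (hδ1 : δ ≤ 1)
    (τk σk σkm1 θk : ℝ) (hτk : 0 < τk) (hσk : 0 < σk) (hσkm1 : 0 < σkm1)
    (hθk : θk = σk / σkm1)
    (xk xkp1 : EuclideanSpace ℝ (Fin n))
    (zkm1 zk zbar zkp1 : EuclideanSpace ℝ (Fin m))
    (hxk : xk ∈ interior domp) (hxkp1 : xkp1 ∈ interior domp) (hxkp1f : xkp1 ∈ domf)
    -- (i) previous dual update
    (hi : zk = zkm1 + σkm1 • (A xk - b))
    -- (ii) extrapolation step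
    (hii : zbar = zk + θk • (zk - zkm1))
    -- (iii) primal Bregman prox inequality
    (hiii : ∀ x ∈ domf ∩ domp,
      f xkp1 - f x ≤
        (1/τk) * (breg φp gp x xk - breg φp gp x xkp1 - breg φp gp xkp1 xk)
          + ⟪(ContinuousLinearMap.adjoint A) zbar + gh xk, x - xkp1⟫)
    -- (iv) dual update
    (hiv : zkp1 = zk + σk • (A xkp1 - b))
    -- (v) line-search exit condition
    (hv : ⟪zkp1 - zbar, A (xkp1 - xk)⟫ + breg h gh xkp1 xk ≤
      (δ^2/τk) * breg φp gp xkp1 xk + (1/(2*σk)) * ‖zbar - zkp1‖^2) :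
    ∀ x ∈ domf ∩ domp, ∀ z : EuclideanSpace ℝ (Fin m),
      (f xkp1 + h xkp1 + ⟪z, A xkp1 - b⟫) - (f x + h x + ⟪zbar, A x - b⟫) ≤
        (1/τk) * (breg φp gp x xk - breg φp gp x xkp1
            - (1 - δ^2) * breg φp gp xkp1 xk)
          + (1/(2*σk)) * (‖z - zk‖^2 - ‖z - zkp1‖^2 - ‖zbar - zk‖^2) := by
  intro x hx z
  -- rewrite the prox inequality's inner product
  have h1 := hiii x hx
  rw [inner_add_left, ContinuousLinearMap.adjoint_inner_left, map_sub] at h1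
  -- key dual relation: zkp1 - zbar = σk • (A xkp1 - A xk)
  have h0 : zk - zkm1 = σkm1 • (A xk - b) := by rw [hi]; abel
  have hθσ : θk * σkm1 = σk := by rw [hθk]; field_simp
  have hzdiff : zkp1 - zbar = σk • (A xkp1 - A xk) := by
    calc zkp1 - zbar = σk • (A xkp1 - b) - θk • (zk - zkm1) := by rw [hiv, hii]; abel
      _ = σk • (A xkp1 - b) - θk • (σkm1 • (A xk - b)) := by rw [h0]
      _ = σk • (A xkp1 - b) - σk • (A xk - b) := by rw [smul_smul, hθσ]
      _ = σk • (A xkp1 - A xk) := by rw [← smul_sub]; congr 1; abel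
  have hE1 : ⟪zkp1 - zbar, A (xkp1 - xk)⟫ = (1/σk) * ‖zkp1 - zbar‖^2 := by
    have hA : A (xkp1 - xk) = (1/σk) • (zkp1 - zbar) := by
      rw [hzdiff, smul_smul, one_div, inv_mul_cancel₀ hσk.ne', one_smul, map_sub]
    rw [hA, real_inner_smul_right, real_inner_self_eq_norm_sq]
  -- line-search consequence
  have hB : breg h gh xkp1 xk ≤
      (δ^2/τk) * breg φp gp xkp1 xk - (1/(2*σk)) * ‖zkp1 - zbar‖^2 := by
    have hnorm : ‖zbar - zkp1‖ = ‖zkp1 - zbar‖ := norm_sub_rev _ _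
    rw [hE1, hnorm] at hv
    have hσ2 : 1/σk = 2 * (1/(2*σk)) := by field_simp
    rw [hσ2] at hv
    linarith
  -- convexity of h: Bregman distances nonneg
  have hC : 0 ≤ breg h gh x xk := by
    have := convex_grad_ineq hhconv (hhgrad xk) x
    simp only [breg]; linarith
  -- h difference via Bregman distances
  have hG : ⟪gh xk, x - xkp1⟫ = -⟪gh xk, xkp1 - x⟫ := by
    rw [← inner_neg_right]; congr 1; abel
  have hD : h xkp1 - h x = breg h gh xkp1 xk - breg h gh x xk + ⟪gh xk, xkp1 - x⟫ := by
    simp only [breg]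
    have e : ⟪gh xk, xkp1 - xk⟫ - ⟪gh xk, x - xk⟫ = ⟪gh xk, xkp1 - x⟫ := by
      rw [← inner_sub_right]; congr 1; abel
    linarith
  -- dual inner products identity
  have hE3 : ⟪z - zbar, zkp1 - zk⟫ = σk * ⟪z - zbar, A xkp1 - b⟫ := by
    have e : zkp1 - zk = σk • (A xkp1 - b) := by rw [hiv]; abel
    rw [e, real_inner_smul_right]
  have hE2 : ⟪z - zbar, zkp1 - zk⟫ =
      (1/2) * (‖z - zk‖^2 - ‖z - zkp1‖^2 - ‖zbar - zk‖^2 + ‖zkp1 - zbar‖^2) := by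
    simp only [norm_sub_sq_real, inner_sub_left, inner_sub_right,
      real_inner_comm zkp1 zbar]
    ring
  have key : ⟪z, A xkp1 - b⟫ - ⟪zbar, A x - b⟫ + ⟪zbar, A x - A xkp1⟫ =
      (1/(2*σk)) * (‖z - zk‖^2 - ‖z - zkp1‖^2 - ‖zbar - zk‖^2)
        + (1/(2*σk)) * ‖zkp1 - zbar‖^2 := by
    have e1 : ⟪z, A xkp1 - b⟫ - ⟪zbar, A x - b⟫ + ⟪zbar, A x - A xkp1⟫ =
        ⟪z - zbar, A xkp1 - b⟫ := by
      simp only [inner_sub_left, inner_sub_right]; ring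
    have e2 : ⟪z - zbar, A xkp1 - b⟫ = (1/σk) * ⟪z - zbar, zkp1 - zk⟫ := by
      rw [hE3]; field_simp
    rw [e1, e2, hE2]; ring
  have hid : (1/τk) * (breg φp gp x xk - breg φp gp x xkp1
        - (1 - δ^2) * breg φp gp xkp1 xk)
      = (1/τk) * (breg φp gp x xk - breg φp gp x xkp1 - breg φp gp xkp1 xk)
        + (δ^2/τk) * breg φp gp xkp1 xk := by ring
  linarith [h1, hD, hB, hC, key, hG, hid]
end

section
/- (One-iteration inequality for Bregman PD3O.) Suppose h : ℝⁿ → ℝ is convex differentiable with L-Lipschitz gradient in the Euclidean norm, στ‖A‖² ≤ 1, τ ≤ 1/L, d_p(x,x') ≥ (1/2)‖x−x'‖² (Euclidean) and d_d(z,z') ≥ (1/2)‖z−z'‖_d². Suppose x⁰ ∈ interior(dom φ_p), z⁰ ∈ interior(dom φ_d), and x¹, z¹ satisfy: (i) τ(f(x¹) − f(x)) ≤ d_p(x,x⁰) − d_p(x¹,x⁰) − d_p(x,x¹) + τ⟨Aᵀz⁰ + ∇h(x⁰), x − x¹⟩ for all x ∈ dom f ∩ dom φ_p, and (ii) σ(g*(z¹)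 − g*(z)) ≤ d_d(z,z⁰) − d_d(z¹,z⁰) − d_d(z,z¹) − σ⟨z − z¹, A(2x¹ − x⁰ + τ(∇h(x⁰) − ∇h(x¹)))⟩ for all z ∈ dom g* ∩ dom φ_d. Then for all such x and z: 𝓛(x¹, z) − 𝓛(x, z¹) ≤ d_pd3o(x, ∇h(x), z; x⁰, ∇h(x⁰), z⁰) − d_pd3o(x, ∇h(x), z; x¹, ∇h(x¹), z¹) − d_pd3o(x¹, ∇h(x), z¹; x⁰, ∇h(x⁰), z⁰). -/
open scoped RealInnerProductSpace

/-- The PD3O primal–dual distance. -/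
noncomputable def dpd3o {V W : Type*} [NormedAddCommGroup V] [InnerProductSpace ℝ V]
    [NormedAddCommGroup W] [InnerProductSpace ℝ W]
    (τ σ : ℝ) (φp : V → ℝ) (gp : V → V) (φd : W → ℝ) (gd : W → W)
    (A : V →L[ℝ] W) (x y : V) (z : W) (x' y' : V) (z' : W) : ℝ :=
  (1/τ) * breg φp gp x x' + (1/σ) * breg φd gd z z' + (τ/2) * ‖y - y'‖^2
    - ⟪y - y', x - x'⟫ - ⟪z - z', A (x - x')⟫ + τ * ⟪z - z', A (y - y')⟫

/-!
Adding the primal and dual prox inequalities bounds the gap except for the smooth term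
`h x¹ - h x`. Convexity together with the descent lemma, applied at a gradient step, gives the
sharpened first-order bound
`h x¹ - h x ≤ ⟪∇h x¹, x¹ - x⟫ - ‖∇h x - ∇h x¹‖² / (2L)`, and `τ ≤ 1/L` lets this absorb the term
`(τ/2)‖∇h x - ∇h x¹‖²` of the PD3O distance. What remains is a bilinear identity between the
three PD3O distances, in which the Bregman terms enter exactly as in the prox inequalities.
-/

section Gradient

variable {E : Type*} [NormedAddCommGroup E] [InnerProductSpace ℝ E] [CompleteSpace E]
  {h : E → ℝ} {gh : E → E}

theorem HasGradientAt.hasDerivAt_comp_add_smul {a v g : E} {t : ℝ}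
    (hg : HasGradientAt h g (a + t • v)) :
    HasDerivAt (fun s : ℝ => h (a + s • v)) ⟪g, v⟫ t := by
  have hline : HasDerivAt (fun s : ℝ => a + s • v) v t := by
    simpa using ((hasDerivAt_id t).smul_const v).const_add a
  simpa [Function.comp_def] using
    (hasGradientAt_iff_hasFDerivAt.mp hg).comp_hasDerivAt t hline

theorem ConvexOn.add_inner_le_of_hasGradientAt_s14 (hconv : ConvexOn ℝ Set.univ h)
    {a : E} {g : E} (hg : HasGradientAt h g a) (b : E) :
    h a + ⟪g, b - a⟫ ≤ h b := by
  have hline : ConvexOn ℝ Set.univ (fun t : ℝ => h (a + t • (b - a))) := by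
    have hcomp : (fun t : ℝ => h (a + t • (b - a))) = h ∘ AffineMap.lineMap a b := by
      funext t
      simp [AffineMap.lineMap_apply_module', add_comm]
    rw [hcomp]
    exact hconv.comp_affineMap _
  have hderiv : HasDerivAt (fun t : ℝ => h (a + t • (b - a))) ⟪g, b - a⟫ 0 :=
    HasGradientAt.hasDerivAt_comp_add_smul (by simpa using hg)
  have := hline.le_slope_of_hasDerivAt trivial trivial one_pos hderiv
  simp only [slope_def_field, one_smul, add_sub_cancel, zero_smul, add_zero, sub_zero,
    div_one] at this
  linarith

theorem le_add_inner_add_of_gradient_lipschitz (hgrad : ∀ x, HasGradientAt h (gh x) x)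
    {L : ℝ} (hlip : ∀ x y, ‖gh x - gh y‖ ≤ L * ‖x - y‖) (a b : E) :
    h b ≤ h a + ⟪gh a, b - a⟫ + L / 2 * ‖b - a‖ ^ 2 := by
  set v := b - a
  let q : ℝ → ℝ := fun t => h (a + t • v) - t * ⟪gh a, v⟫ - L / 2 * ‖v‖ ^ 2 * t ^ 2
  have hq : ∀ t, HasDerivAt q (⟪gh (a + t • v) - gh a, v⟫ - L * ‖v‖ ^ 2 * t) t := by
    intro t
    have := (((hgrad (a + t • v)).hasDerivAt_comp_add_smul).sub
      ((hasDerivAt_id t).mul_const ⟪gh a, v⟫)).sub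
      (((hasDerivAt_pow 2 t).const_mul (L / 2 * ‖v‖ ^ 2)))
    exact this.congr_deriv (by rw [inner_sub_left]; simp only [one_mul, Nat.cast_ofNat, Nat.add_one_sub_one, pow_one]; ring)
  obtain ⟨c, hc, hqc⟩ := exists_hasDerivAt_eq_slope q _ zero_lt_one
    (fun t _ => (hq t).continuousAt.continuousWithinAt) (fun t _ => hq t)
  have hslope : ⟪gh (a + c • v) - gh a, v⟫ ≤ L * ‖v‖ ^ 2 * c :=
    calc ⟪gh (a + c • v) - gh a, v⟫ ≤ ‖gh (a + c • v) - gh a‖ * ‖v‖ := real_inner_le_norm _ _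
      _ ≤ L * ‖c • v‖ * ‖v‖ := by gcongr; simpa using hlip (a + c • v) a
      _ = L * ‖v‖ ^ 2 * c := by rw [norm_smul, Real.norm_of_nonneg hc.1.le]; ring
  have hq0 : q 0 = h a := by simp [q]
  have hq1 : q 1 = h b - ⟪gh a, v⟫ - L / 2 * ‖v‖ ^ 2 := by simp [q, v]
  rw [sub_zero, div_one, hq0, hq1] at hqc
  linarith

theorem ConvexOn.sq_norm_gradient_sub_div_le (hconv : ConvexOn ℝ Set.univ h)
    (hgrad : ∀ x, HasGradientAt h (gh x) x) {L : ℝ} (hL : 0 < L)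
    (hlip : ∀ x y, ‖gh x - gh y‖ ≤ L * ‖x - y‖) (a b : E) :
    ‖gh a - gh b‖ ^ 2 / (2 * L) ≤ h a - h b - ⟪gh b, a - b⟫ := by
  set d := gh a - gh b
  -- `w` is the gradient step from `a` for `h - ⟪∇h b, ·⟫`, a function minimised at `b`
  set w := a - L⁻¹ • d
  have hlow : h b + ⟪gh b, w - b⟫ ≤ h w := hconv.add_inner_le_of_hasGradientAt_s14 (hgrad b) w
  have hup : h w ≤ h a + ⟪gh a, w - a⟫ + L / 2 * ‖w - a‖ ^ 2 :=
    le_add_inner_add_of_gradient_lipschitz hgrad hlip a w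
  have hwa : w - a = -(L⁻¹ • d) := by simp [w]
  have hwb : w - b = (a - b) - L⁻¹ • d := by simp only [w]; abel
  rw [hwa, norm_neg, norm_smul, Real.norm_of_nonneg (inv_nonneg.2 hL.le), inner_neg_right,
    real_inner_smul_right] at hup
  rw [hwb, inner_sub_right, real_inner_smul_right] at hlow
  have hd : L⁻¹ * ⟪gh a, d⟫ - L⁻¹ * ⟪gh b, d⟫ = 2 * (‖d‖ ^ 2 / (2 * L)) := by
    rw [← mul_sub, ← inner_sub_left]
    change L⁻¹ * ⟪d, d⟫ = _
    rw [real_inner_self_eq_norm_sq]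
    field_simp
  have hquad : L / 2 * (L⁻¹ * ‖d‖) ^ 2 = ‖d‖ ^ 2 / (2 * L) := by field_simp
  linarith

end Gradient

theorem dpd3o_sub_dpd3o_sub_dpd3o {V W : Type*} [NormedAddCommGroup V] [InnerProductSpace ℝ V]
    [NormedAddCommGroup W] [InnerProductSpace ℝ W]
    (τ σ : ℝ) (φp : V → ℝ) (gp : V → V) (φd : W → ℝ) (gd : W → W) (A : V →L[ℝ] W)
    (x y x0 y0 x1 y1 : V) (z z0 z1 : W) :
    dpd3o τ σ φp gp φd gd A x y z x0 y0 z0 - dpd3o τ σ φp gp φd gd A x y z x1 y1 z1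
        - dpd3o τ σ φp gp φd gd A x1 y z1 x0 y0 z0 =
      1 / τ * (breg φp gp x x0 - breg φp gp x1 x0 - breg φp gp x x1)
        + 1 / σ * (breg φd gd z z0 - breg φd gd z1 z0 - breg φd gd z z1)
        - τ / 2 * ‖y - y1‖ ^ 2 + ⟪y0 - y1, x - x1⟫
        - ⟪z - z0, A (x - x0)⟫ + ⟪z - z1, A (x - x1)⟫ + ⟪z1 - z0, A (x1 - x0)⟫
        + τ * ⟪z - z1, A (y1 - y0)⟫ := by
  simp only [dpd3o, inner_sub_left, inner_sub_right, map_sub]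
  ring

theorem stmt14_general {n m : ℕ}
    (f : EuclideanSpace ℝ (Fin n) → ℝ) (domf : Set (EuclideanSpace ℝ (Fin n)))
    (gs : EuclideanSpace ℝ (Fin m) → ℝ) (domgs : Set (EuclideanSpace ℝ (Fin m)))
    (h : EuclideanSpace ℝ (Fin n) → ℝ)
    (gh : EuclideanSpace ℝ (Fin n) → EuclideanSpace ℝ (Fin n))
    (hhconv : ConvexOn ℝ Set.univ h)
    (hhgrad : ∀ x, HasGradientAt h (gh x) x)
    (L : ℝ) (hL : 0 < L)
    (hlip : ∀ x y, ‖gh x - gh y‖ ≤ L * ‖x - y‖)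
    (A : EuclideanSpace ℝ (Fin n) →L[ℝ] EuclideanSpace ℝ (Fin m))
    (φp : EuclideanSpace ℝ (Fin n) → ℝ)
    (gp : EuclideanSpace ℝ (Fin n) → EuclideanSpace ℝ (Fin n))
    (domp : Set (EuclideanSpace ℝ (Fin n)))
    (φd : EuclideanSpace ℝ (Fin m) → ℝ)
    (gd : EuclideanSpace ℝ (Fin m) → EuclideanSpace ℝ (Fin m))
    (domd : Set (EuclideanSpace ℝ (Fin m)))
    (σ τ : ℝ) (hσ : 0 < σ) (hτ : 0 < τ)
    (hτL : τ ≤ 1/L)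
    (x0 x1 : EuclideanSpace ℝ (Fin n)) (z0 z1 : EuclideanSpace ℝ (Fin m))
    -- (i) optimality of the primal Bregman prox step
    (hprimal : ∀ x ∈ domf ∩ domp,
      τ * (f x1 - f x) ≤
        breg φp gp x x0 - breg φp gp x1 x0 - breg φp gp x x1
          + τ * ⟪(ContinuousLinearMap.adjoint A) z0 + gh x0, x - x1⟫)
    -- (ii) optimality of the dual Bregman prox step
    (hdual : ∀ z ∈ domgs ∩ domd,
      σ * (gs z1 - gs z) ≤
        breg φd gd z z0 - breg φd gd z1 z0 - breg φd gd z z1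
          - σ * ⟪z - z1, A ((2:ℝ) • x1 - x0 + τ • (gh x0 - gh x1))⟫) :
    ∀ x ∈ domf ∩ domp, ∀ z ∈ domgs ∩ domd,
      (f x1 + h x1 + ⟪z, A x1⟫ - gs z) - (f x + h x + ⟪z1, A x⟫ - gs z1) ≤
        dpd3o τ σ φp gp φd gd A x (gh x) z x0 (gh x0) z0
          - dpd3o τ σ φp gp φd gd A x (gh x) z x1 (gh x1) z1
          - dpd3o τ σ φp gp φd gd A x1 (gh x) z1 x0 (gh x0) z0 := by
  intro x hx z hz
  have hP : f x1 - f x ≤ 1 / τ * (breg φp gp x x0 - breg φp gp x1 x0 - breg φp gp x x1)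
      + ⟪(ContinuousLinearMap.adjoint A) z0 + gh x0, x - x1⟫ := by
    rw [← sub_le_iff_le_add, one_div, le_inv_mul_iff₀ hτ]
    linarith [hprimal x hx]
  have hD : gs z1 - gs z ≤ 1 / σ * (breg φd gd z z0 - breg φd gd z1 z0 - breg φd gd z z1)
      - ⟪z - z1, A ((2:ℝ) • x1 - x0 + τ • (gh x0 - gh x1))⟫ := by
    rw [le_sub_iff_add_le, one_div, le_inv_mul_iff₀ hσ]
    linarith [hdual z hz]
  have hτL_mul : τ * L ≤ 1 := (le_div_iff₀ hL).1 hτL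
  have hH : τ / 2 * ‖gh x - gh x1‖ ^ 2 ≤ h x - h x1 - ⟪gh x1, x - x1⟫ := by
    refine le_trans ?_ (hhconv.sq_norm_gradient_sub_div_le hhgrad hL hlip x x1)
    rw [le_div_iff₀ (by positivity)]
    nlinarith [sq_nonneg ‖gh x - gh x1‖]
  rw [dpd3o_sub_dpd3o_sub_dpd3o]
  simp only [inner_add_left, inner_sub_left, inner_sub_right, map_add, map_sub, map_smul,
    inner_add_right, real_inner_smul_right, ContinuousLinearMap.adjoint_inner_left] at hP hD hH ⊢
  linarith

theorem stmt14 {n m : ℕ}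
    (f : EuclideanSpace ℝ (Fin n) → ℝ) (domf : Set (EuclideanSpace ℝ (Fin n)))
    (hf : ConvexOn ℝ domf f)
    (gs : EuclideanSpace ℝ (Fin m) → ℝ) (domgs : Set (EuclideanSpace ℝ (Fin m)))
    (hgs : ConvexOn ℝ domgs gs)
    (h : EuclideanSpace ℝ (Fin n) → ℝ)
    (gh : EuclideanSpace ℝ (Fin n) → EuclideanSpace ℝ (Fin n))
    (hhconv : ConvexOn ℝ Set.univ h)
    (hhgrad : ∀ x, HasGradientAt h (gh x) x)
    (L : ℝ) (hL : 0 < L)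
    (hlip : ∀ x y, ‖gh x - gh y‖ ≤ L * ‖x - y‖)
    (A : EuclideanSpace ℝ (Fin n) →L[ℝ] EuclideanSpace ℝ (Fin m))
    (φp : EuclideanSpace ℝ (Fin n) → ℝ)
    (gp : EuclideanSpace ℝ (Fin n) → EuclideanSpace ℝ (Fin n))
    (domp : Set (EuclideanSpace ℝ (Fin n)))
    (hpconv : ConvexOn ℝ domp φp)
    (hgp : ∀ u ∈ interior domp, HasGradientAt φp (gp u) u)
    (φd : EuclideanSpace ℝ (Fin m) → ℝ)
    (gd : EuclideanSpace ℝ (Fin m) → EuclideanSpace ℝ (Fin m))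
    (domd : Set (EuclideanSpace ℝ (Fin m)))
    (hdconv : ConvexOn ℝ domd φd)
    (hgd : ∀ u ∈ interior domd, HasGradientAt φd (gd u) u)
    (nd : EuclideanSpace ℝ (Fin m) → ℝ) (hnd : ∀ v, 0 ≤ nd v)
    (nA : ℝ) (hnA : 0 ≤ nA)
    (hA : ∀ u v, |⟪v, A u⟫| ≤ nA * ‖u‖ * nd v)
    (hscp : ∀ x ∈ domp, ∀ x' ∈ interior domp,
      (1/2) * ‖x - x'‖^2 ≤ breg φp gp x x')
    (hscd : ∀ z ∈ domd, ∀ z' ∈ interior domd,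
      (1/2) * (nd (z - z'))^2 ≤ breg φd gd z z')
    (σ τ : ℝ) (hσ : 0 < σ) (hτ : 0 < τ)
    (hstep : σ * τ * nA^2 ≤ 1) (hτL : τ ≤ 1/L)
    (x0 x1 : EuclideanSpace ℝ (Fin n)) (z0 z1 : EuclideanSpace ℝ (Fin m))
    (hx0 : x0 ∈ interior domp) (hz0 : z0 ∈ interior domd)
    (hx1 : x1 ∈ interior domp) (hz1 : z1 ∈ interior domd)
    (hx1f : x1 ∈ domf) (hz1g : z1 ∈ domgs)
    -- (i) optimality of the primal Bregman prox step
    (hprimal : ∀ x ∈ domf ∩ domp,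
      τ * (f x1 - f x) ≤
        breg φp gp x x0 - breg φp gp x1 x0 - breg φp gp x x1
          + τ * ⟪(ContinuousLinearMap.adjoint A) z0 + gh x0, x - x1⟫)
    -- (ii) optimality of the dual Bregman prox step
    (hdual : ∀ z ∈ domgs ∩ domd,
      σ * (gs z1 - gs z) ≤
        breg φd gd z z0 - breg φd gd z1 z0 - breg φd gd z z1
          - σ * ⟪z - z1, A ((2:ℝ) • x1 - x0 + τ • (gh x0 - gh x1))⟫) :
    ∀ x ∈ domf ∩ domp, ∀ z ∈ domgs ∩ domd,
      (f x1 + h x1 + ⟪z, A x1⟫ - gs z) - (f x + h x + ⟪z1, A x⟫ - gs z1) ≤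
        dpd3o τ σ φp gp φd gd A x (gh x) z x0 (gh x0) z0
          - dpd3o τ σ φp gp φd gd A x (gh x) z x1 (gh x1) z1
          - dpd3o τ σ φp gp φd gd A x1 (gh x) z1 x0 (gh x0) z0 :=
  stmt14_general f domf gs domgs h gh hhconv hhgrad L hL hlip A φp gp domp φd gd domd σ τ hσ hτ hτL
    x0 x1 z0 z1 hprimal hdual
end

section
/- (Ergodic convergence of Bregman PD3O.) Suppose h : ℝⁿ → ℝ is convex differentiable with L-Lipschitz gradient (Euclidean norm), στ‖A‖² ≤ 1, τ ≤ 1/L, d_p(x,x') ≥ (1/2)‖x−x'‖² (Euclidean) and d_d(z,z') ≥ (1/2)‖z−z'‖_d². Let (x⁽ⁱ⁾, z⁽ⁱ⁾), i = 0, …, k, be iterates such that for all i = 0, …, k−1 and all x ∈ dom f ∩ dom φ_p, z ∈ dom g* ∩ dom φ_d: 𝓛(x⁽ⁱ⁺¹⁾, z) − 𝓛(x, z⁽ⁱ⁺¹⁾) ≤ d_pd3o(x, ∇h(x), z; x⁽ⁱ⁾, ∇h(x⁽ⁱ⁾), z⁽ⁱ⁾) − d_pd3o(x, ∇h(x), z;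 x⁽ⁱ⁺¹⁾, ∇h(x⁽ⁱ⁺¹⁾), z⁽ⁱ⁺¹⁾). Define x_avg = (1/k)∑_{i=1}^k x⁽ⁱ⁾ and z_avg = (1/k)∑_{i=1}^k z⁽ⁱ⁾. Then for all such x, z: 𝓛(x_avg, z) − 𝓛(x, z_avg) ≤ (3/k)·((2/τ) d_p(x, x⁽⁰⁾) + (1/σ) d_d(z, z⁽⁰⁾)). -/
open scoped RealInnerProductSpace

private lemma amgm_aux_s15 (σ τ nA s t r b : ℝ) (hs2 : s^2 = σ) (ht2 : t^2 = τ)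
    (hst : nA*s*t ≤ 1) (hr0 : 0 ≤ r) (hb0 : 0 ≤ b) (hs0 : 0 ≤ s) (ht0 : 0 ≤ t) :
    2*(σ*τ)*(nA*r*b) ≤ σ*r^2 + τ*b^2 := by
  have hstrb : (0:ℝ) ≤ s*t*r*b := by positivity
  have h2 : (nA*s*t)*(s*t*r*b) ≤ 1*(s*t*r*b) := mul_le_mul_of_nonneg_right hst hstrb
  calc 2*(σ*τ)*(nA*r*b) = 2*((nA*s*t)*(s*t*r*b)) := by rw [← hs2, ← ht2]; ring
  _ ≤ 2*(s*t*r*b) := by linarith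
  _ ≤ (s*r)^2 + (t*b)^2 := by nlinarith [sq_nonneg (s*r - t*b)]
  _ = σ*r^2 + τ*b^2 := by rw [← hs2, ← ht2]; ring

set_option maxHeartbeats 1600000 in
theorem stmt15 {n m : ℕ}
    (f : EuclideanSpace ℝ (Fin n) → ℝ) (domf : Set (EuclideanSpace ℝ (Fin n)))
    (hf : ConvexOn ℝ domf f)
    (gs : EuclideanSpace ℝ (Fin m) → ℝ) (domgs : Set (EuclideanSpace ℝ (Fin m)))
    (hgs : ConvexOn ℝ domgs gs)
    (h : EuclideanSpace ℝ (Fin n) → ℝ)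
    (gh : EuclideanSpace ℝ (Fin n) → EuclideanSpace ℝ (Fin n))
    (hhconv : ConvexOn ℝ Set.univ h)
    (hhgrad : ∀ x, HasGradientAt h (gh x) x)
    (L : ℝ) (hL : 0 < L)
    (hlip : ∀ x y, ‖gh x - gh y‖ ≤ L * ‖x - y‖)
    (A : EuclideanSpace ℝ (Fin n) →L[ℝ] EuclideanSpace ℝ (Fin m))
    (φp : EuclideanSpace ℝ (Fin n) → ℝ)
    (gp : EuclideanSpace ℝ (Fin n) → EuclideanSpace ℝ (Fin n))
    (domp : Set (EuclideanSpace ℝ (Fin n)))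
    (hpconv : ConvexOn ℝ domp φp)
    (hgp : ∀ u ∈ interior domp, HasGradientAt φp (gp u) u)
    (φd : EuclideanSpace ℝ (Fin m) → ℝ)
    (gd : EuclideanSpace ℝ (Fin m) → EuclideanSpace ℝ (Fin m))
    (domd : Set (EuclideanSpace ℝ (Fin m)))
    (hdconv : ConvexOn ℝ domd φd)
    (hgd : ∀ u ∈ interior domd, HasGradientAt φd (gd u) u)
    (nd : EuclideanSpace ℝ (Fin m) → ℝ) (hnd : ∀ v, 0 ≤ nd v)
    (nA : ℝ) (hnA : 0 ≤ nA)
    (hA : ∀ u v, |⟪v, A u⟫| ≤ nA * ‖u‖ * nd v)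
    (hscp : ∀ x ∈ domp, ∀ x' ∈ interior domp,
      (1/2) * ‖x - x'‖^2 ≤ breg φp gp x x')
    (hscd : ∀ z ∈ domd, ∀ z' ∈ interior domd,
      (1/2) * (nd (z - z'))^2 ≤ breg φd gd z z')
    (σ τ : ℝ) (hσ : 0 < σ) (hτ : 0 < τ)
    (hstep : σ * τ * nA^2 ≤ 1) (hτL : τ ≤ 1/L)
    (k : ℕ) (hk : 0 < k)
    (X : ℕ → EuclideanSpace ℝ (Fin n)) (Z : ℕ → EuclideanSpace ℝ (Fin m))
    (hX : ∀ i ≤ k, X i ∈ domf ∧ X i ∈ interior domp)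
    (hZ : ∀ i ≤ k, Z i ∈ domgs ∧ Z i ∈ interior domd)
    (hdesc : ∀ i < k, ∀ x ∈ domf ∩ domp, ∀ z ∈ domgs ∩ domd,
      (f (X (i+1)) + h (X (i+1)) + ⟪z, A (X (i+1))⟫ - gs z)
          - (f x + h x + ⟪Z (i+1), A x⟫ - gs (Z (i+1)))
        ≤ dpd3o τ σ φp gp φd gd A x (gh x) z (X i) (gh (X i)) (Z i)
            - dpd3o τ σ φp gp φd gd A x (gh x) z (X (i+1)) (gh (X (i+1))) (Z (i+1))) :
    ∀ x ∈ domf ∩ domp, ∀ z ∈ domgs ∩ domd,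
      ∀ xavg zavg,
        xavg = (k:ℝ)⁻¹ • ∑ i ∈ Finset.Icc 1 k, X i →
        zavg = (k:ℝ)⁻¹ • ∑ i ∈ Finset.Icc 1 k, Z i →
        (f xavg + h xavg + ⟪z, A xavg⟫ - gs z)
            - (f x + h x + ⟪zavg, A x⟫ - gs zavg)
          ≤ (3/(k:ℝ)) * ((2/τ) * breg φp gp x (X 0) + (1/σ) * breg φd gd z (Z 0)) := by
  intro x hx z hz xavg zavg hxa hza
  have hkpos : (0:ℝ) < (k:ℝ) := by exact_mod_cast hk
  set Dd : ℕ → ℝ := fun i =>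
    dpd3o τ σ φp gp φd gd A x (gh x) z (X i) (gh (X i)) (Z i) with hDd
  -- sqrt setup
  set s := Real.sqrt σ with hs
  set t := Real.sqrt τ with ht
  have hs0 : 0 < s := Real.sqrt_pos.mpr hσ
  have ht0 : 0 < t := Real.sqrt_pos.mpr hτ
  have hs2 : s^2 = σ := Real.sq_sqrt hσ.le
  have ht2 : t^2 = τ := Real.sq_sqrt hτ.le
  have hst : nA * s * t ≤ 1 := by
    have h1 : (nA*s*t)^2 ≤ 1 := by
      have e : (nA*s*t)^2 = σ*τ*nA^2 := by rw [mul_pow, mul_pow, hs2, ht2]; ring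
      rw [e]; exact hstep
    nlinarith [sq_nonneg (nA*s*t - 1), mul_nonneg (mul_nonneg hnA hs0.le) ht0.le]
  have hτL' : τ * L ≤ 1 := by
    rw [le_div_iff₀ hL] at hτL; linarith
  have hστ : (0:ℝ) < σ*τ := mul_pos hσ hτ
  -- lower bound on Dd k
  have hDk : 0 ≤ Dd k := by
    obtain ⟨hXf, hXp⟩ := hX k le_rfl
    obtain ⟨hZg, hZd⟩ := hZ k le_rfl
    set u := x - X k with hu
    set v := gh x - gh (X k) with hv
    set w := z - Z k with hw
    set P := breg φp gp x (X k) with hPd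
    set Q := breg φd gd z (Z k) with hQd
    set a := ‖u‖ with ha
    set b := nd w with hb
    set c := ‖v‖ with hc
    set r := ‖u - τ • v‖ with hrr
    have hP : (1/2) * a^2 ≤ P := hscp x hx.2 (X k) hXp
    have hQ : (1/2) * b^2 ≤ Q := hscd z hz.2 (Z k) hZd
    have hb0 : 0 ≤ b := hnd w
    have hr0 : 0 ≤ r := norm_nonneg _
    set J1 := (⟪v, u⟫ : ℝ) with hJ1
    set J2 := (⟪w, A u⟫ : ℝ) with hJ2
    set J3 := (⟪w, A v⟫ : ℝ) with hJ3
    set I2 := (⟪w, A (u - τ • v)⟫ : ℝ) with hI2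
    have hlin : J2 - τ * J3 = I2 := by
      rw [hI2, map_sub, map_smul, inner_sub_right, real_inner_smul_right]
    have hI2abs : |I2| ≤ nA * r * b := by
      rw [hrr, hb, hI2]; exact hA _ _
    have hI2up : I2 ≤ nA * r * b := le_trans (le_abs_self _) hI2abs
    have hr2 : r^2 = a^2 - 2*(τ*J1) + τ^2*c^2 := by
      rw [hrr, norm_sub_sq_real, real_inner_smul_right, norm_smul, Real.norm_eq_abs,
        abs_of_pos hτ, hJ1, real_inner_comm]
      ring
    have hDdk : Dd k = 1/τ*P + 1/σ*Q + τ/2*c^2 - J1 - J2 + τ*J3 := by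
      simp only [hDd, dpd3o, ← hPd, ← hQd, ← hu, ← hv, ← hw, ← hc, ← hJ1, ← hJ2, ← hJ3]
    clear_value u v w P Q a b c r J1 J2 J3 I2
    have hexp : σ*τ*(Dd k) = σ*P + τ*Q + σ*τ*(τ/2)*c^2 - σ*τ*J1 - σ*τ*I2 := by
      rw [hDdk, ← hlin]; field_simp; ring
    have hr2' : σ*r^2 = σ*a^2 - 2*σ*(τ*J1) + σ*τ^2*c^2 := by
      linear_combination σ * hr2
    have hPσ : σ*((1/2)*a^2) ≤ σ*P := mul_le_mul_of_nonneg_left hP hσ.le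
    have hQτ : τ*((1/2)*b^2) ≤ τ*Q := mul_le_mul_of_nonneg_left hQ hτ.le
    have hI2στ : σ*τ*I2 ≤ σ*τ*(nA*r*b) :=
      mul_le_mul_of_nonneg_left hI2up hστ.le
    have hfin : 2*(σ*τ)*(nA*r*b) ≤ σ*r^2 + τ*b^2 :=
      amgm_aux_s15 σ τ nA s t r b hs2 ht2 hst hr0 hb0 hs0.le ht0.le
    have hkey : 0 ≤ σ*τ*(Dd k) := by
      rw [hexp]; linarith
    exact (mul_nonneg_iff_of_pos_left hστ).mp hkey
  -- upper bound on Dd 0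
  have hD0 : Dd 0 ≤ 3 * ((2/τ) * breg φp gp x (X 0) + (1/σ) * breg φd gd z (Z 0)) := by
    obtain ⟨hXf, hXp⟩ := hX 0 (Nat.zero_le k)
    obtain ⟨hZg, hZd⟩ := hZ 0 (Nat.zero_le k)
    set u := x - X 0 with hu
    set v := gh x - gh (X 0) with hv
    set w := z - Z 0 with hw
    set P := breg φp gp x (X 0) with hPd
    set Q := breg φd gd z (Z 0) with hQd
    set a := ‖u‖ with ha
    set b := nd w with hb
    set c := ‖v‖ with hc
    set r := ‖u - τ • v‖ with hrr
    have hP : (1/2) * a^2 ≤ P := hscp x hx.2 (X 0) hXp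
    have hQ : (1/2) * b^2 ≤ Q := hscd z hz.2 (Z 0) hZd
    have ha0 : 0 ≤ a := norm_nonneg _
    have hb0 : 0 ≤ b := hnd w
    have hc0 : 0 ≤ c := norm_nonneg _
    have hr0 : 0 ≤ r := norm_nonneg _
    set J1 := (⟪v, u⟫ : ℝ) with hJ1
    set J2 := (⟪w, A u⟫ : ℝ) with hJ2
    set J3 := (⟪w, A v⟫ : ℝ) with hJ3
    set I2 := (⟪w, A (u - τ • v)⟫ : ℝ) with hI2
    have hlin : J2 - τ * J3 = I2 := by
      rw [hI2, map_sub, map_smul, inner_sub_right, real_inner_smul_right]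
    have hI2abs : |I2| ≤ nA * r * b := by
      rw [hrr, hb, hI2]; exact hA _ _
    have hcLa : c ≤ L * a := hlip x (X 0)
    have hJ1abs : |J1| ≤ c * a := by
      rw [hJ1, hc, ha]
      calc |(⟪v, u⟫ : ℝ)| ≤ ‖v‖ * ‖u‖ := abs_real_inner_le_norm v u
      _ = ‖v‖ * ‖u‖ := rfl
    have hrle : r ≤ a + τ * c := by
      rw [hrr, ha, hc]
      calc ‖u - τ • v‖ ≤ ‖u‖ + ‖τ • v‖ := norm_sub_le _ _
      _ = ‖u‖ + τ * ‖v‖ := by rw [norm_smul, Real.norm_eq_abs, abs_of_pos hτ]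
    have hDdk : Dd 0 = 1/τ*P + 1/σ*Q + τ/2*c^2 - J1 - J2 + τ*J3 := by
      simp only [hDd, dpd3o, ← hPd, ← hQd, ← hu, ← hv, ← hw, ← hc, ← hJ1, ← hJ2, ← hJ3]
    clear_value u v w P Q a b c r J1 J2 J3 I2
    have hI2lo : -(nA * r * b) ≤ I2 := by
      have := neg_abs_le I2; linarith
    have hτc : τ * c ≤ a := by
      have p1 : (0:ℝ) ≤ a*(1 - τ*L) := mul_nonneg ha0 (by linarith)
      have p2 : (0:ℝ) ≤ τ*(L*a - c) := mul_nonneg hτ.le (by linarith)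
      linarith [p1, p2]
    have hI1 : -(c*a) ≤ J1 := by
      have := neg_abs_le J1; linarith
    have hr2a : r ≤ 2 * a := by linarith
    have hexp : σ*τ*(Dd 0) = σ*P + τ*Q + σ*τ*(τ/2)*c^2 - σ*τ*J1 - σ*τ*I2 := by
      rw [hDdk, ← hlin]; field_simp; ring
    -- pieces
    have hsq : (τ*c)^2 ≤ a^2 := by
      have m := mul_self_le_mul_self (mul_nonneg hτ.le hc0) hτc
      linarith [m]
    have A1 : σ*τ*(τ/2)*c^2 ≤ σ/2*a^2 := by
      have m := mul_le_mul_of_nonneg_left hsq (by positivity : (0:ℝ) ≤ σ/2)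
      linarith [m]
    have A2 : σ*τ*(c*a) ≤ σ*a^2 := by
      have m := mul_le_mul_of_nonneg_left hτc (mul_nonneg hσ.le ha0)
      linarith [m]
    have A3 : σ*τ*(nA*r*b) ≤ σ*a^2 + τ*b^2 := by
      have h2a := mul_le_mul_of_nonneg_right
          (mul_le_mul_of_nonneg_left hr2a (by positivity : (0:ℝ) ≤ σ*τ*nA)) hb0
      have := amgm_aux_s15 σ τ nA s t a b hs2 ht2 hst ha0 hb0 hs0.le ht0.le
      linarith [h2a]
    have hJ1' : -(σ*τ*(c*a)) ≤ σ*τ*J1 := by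
      have m := mul_le_mul_of_nonneg_left hI1 hστ.le
      linarith [m]
    have hI2' : -(σ*τ*(nA*r*b)) ≤ σ*τ*I2 := by
      have m := mul_le_mul_of_nonneg_left hI2lo hστ.le
      linarith [m]
    have hPσ : σ*((1/2)*a^2) ≤ σ*P := mul_le_mul_of_nonneg_left hP hσ.le
    have hQτ : τ*((1/2)*b^2) ≤ τ*Q := mul_le_mul_of_nonneg_left hQ hτ.le
    have hkey : σ*τ*(Dd 0) ≤ σ*τ*(3 * ((2/τ)*P + (1/σ)*Q)) := by
      have hrhs : σ*τ*(3 * ((2/τ)*P + (1/σ)*Q)) = 6*(σ*P) + 3*(τ*Q) := by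
        field_simp; ring
      rw [hrhs, hexp]
      linarith
    calc Dd 0 = (σ*τ)⁻¹ * (σ*τ*(Dd 0)) := (inv_mul_cancel_left₀ hστ.ne' _).symm
    _ ≤ (σ*τ)⁻¹ * (σ*τ*(3 * ((2/τ)*P + (1/σ)*Q))) :=
        mul_le_mul_of_nonneg_left hkey (inv_nonneg.mpr hστ.le)
    _ = 3 * ((2/τ)*P + (1/σ)*Q) := inv_mul_cancel_left₀ hστ.ne' _
  -- telescoping
  set F : ℕ → ℝ := fun i =>
    (f (X i) + h (X i) + ⟪z, A (X i)⟫ - gs z)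
      - (f x + h x + ⟪Z i, A x⟫ - gs (Z i)) with hF
  have htel : ∑ i ∈ Finset.range k, F (i+1) ≤ Dd 0 - Dd k := by
    calc ∑ i ∈ Finset.range k, F (i+1)
        ≤ ∑ i ∈ Finset.range k, (Dd i - Dd (i+1)) :=
          Finset.sum_le_sum fun i hi => hdesc i (Finset.mem_range.mp hi) x hx z hz
    _ = Dd 0 - Dd k := Finset.sum_range_sub' Dd k
  have hreidx : ∑ i ∈ Finset.Icc 1 k, F i = ∑ i ∈ Finset.range k, F (i+1) := by
    rw [← Finset.Ico_add_one_right_eq_Icc, Finset.sum_Ico_eq_sum_range]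
    exact Finset.sum_congr (by simp) fun i _ => by rw [Nat.add_comm]
  have hS : ∑ i ∈ Finset.Icc 1 k, F i ≤ Dd 0 := by
    rw [hreidx]; linarith
  -- Jensen
  have hcard : ((Finset.Icc 1 k).card : ℝ) = (k:ℝ) := by
    rw [Nat.card_Icc]; simp
  have hwsum : ∑ _i ∈ Finset.Icc 1 k, (k:ℝ)⁻¹ = 1 := by
    rw [Finset.sum_const, nsmul_eq_mul, hcard, mul_inv_cancel₀ hkpos.ne']
  have hw0 : ∀ i ∈ Finset.Icc 1 k, (0:ℝ) ≤ (k:ℝ)⁻¹ := fun i _ => by positivity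
  have hxa' : xavg = ∑ i ∈ Finset.Icc 1 k, (k:ℝ)⁻¹ • X i := by
    rw [hxa, Finset.smul_sum]
  have hza' : zavg = ∑ i ∈ Finset.Icc 1 k, (k:ℝ)⁻¹ • Z i := by
    rw [hza, Finset.smul_sum]
  have hmemX : ∀ i ∈ Finset.Icc 1 k, X i ∈ domf := fun i hi =>
    (hX i (Finset.mem_Icc.mp hi).2).1
  have hmemZ : ∀ i ∈ Finset.Icc 1 k, Z i ∈ domgs := fun i hi =>
    (hZ i (Finset.mem_Icc.mp hi).2).1
  have hjf : f xavg ≤ ∑ i ∈ Finset.Icc 1 k, (k:ℝ)⁻¹ * f (X i) := by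
    rw [hxa']
    simpa [smul_eq_mul] using hf.map_sum_le hw0 hwsum hmemX
  have hjh : h xavg ≤ ∑ i ∈ Finset.Icc 1 k, (k:ℝ)⁻¹ * h (X i) := by
    rw [hxa']
    simpa [smul_eq_mul] using hhconv.map_sum_le hw0 hwsum (fun i _ => Set.mem_univ _)
  have hjg : gs zavg ≤ ∑ i ∈ Finset.Icc 1 k, (k:ℝ)⁻¹ * gs (Z i) := by
    rw [hza']
    simpa [smul_eq_mul] using hgs.map_sum_le hw0 hwsum hmemZ
  have he1 : (⟪z, A xavg⟫ : ℝ) = ∑ i ∈ Finset.Icc 1 k, (k:ℝ)⁻¹ * ⟪z, A (X i)⟫ := by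
    rw [hxa', map_sum, inner_sum]
    exact Finset.sum_congr rfl fun i _ => by
      rw [map_smul, real_inner_smul_right]
  have he2 : (⟪zavg, A x⟫ : ℝ) = ∑ i ∈ Finset.Icc 1 k, (k:ℝ)⁻¹ * ⟪Z i, A x⟫ := by
    rw [hza', sum_inner]
    exact Finset.sum_congr rfl fun i _ => by rw [real_inner_smul_left]
  have hsumF : ∑ i ∈ Finset.Icc 1 k, (k:ℝ)⁻¹ * F i
      = (∑ i ∈ Finset.Icc 1 k, (k:ℝ)⁻¹ * f (X i))
        + (∑ i ∈ Finset.Icc 1 k, (k:ℝ)⁻¹ * h (X i))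
        + (∑ i ∈ Finset.Icc 1 k, (k:ℝ)⁻¹ * ⟪z, A (X i)⟫)
        - gs z - f x - h x
        - (∑ i ∈ Finset.Icc 1 k, (k:ℝ)⁻¹ * ⟪Z i, A x⟫)
        + (∑ i ∈ Finset.Icc 1 k, (k:ℝ)⁻¹ * gs (Z i)) := by
    have expand : ∀ i ∈ Finset.Icc 1 k, (k:ℝ)⁻¹ * F i
        = (k:ℝ)⁻¹ * f (X i) + (k:ℝ)⁻¹ * h (X i) + (k:ℝ)⁻¹ * ⟪z, A (X i)⟫
          - (k:ℝ)⁻¹ * gs z - (k:ℝ)⁻¹ * f x - (k:ℝ)⁻¹ * h x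
          - (k:ℝ)⁻¹ * ⟪Z i, A x⟫ + (k:ℝ)⁻¹ * gs (Z i) := fun i _ => by
      simp only [hF]; ring
    rw [Finset.sum_congr rfl expand]
    simp only [Finset.sum_add_distrib, Finset.sum_sub_distrib, ← Finset.sum_mul]
    rw [hwsum]
    ring
  have hmain : (f xavg + h xavg + ⟪z, A xavg⟫ - gs z)
      - (f x + h x + ⟪zavg, A x⟫ - gs zavg)
      ≤ ∑ i ∈ Finset.Icc 1 k, (k:ℝ)⁻¹ * F i := by
    rw [hsumF, he1, he2]
    linarith [hjf, hjh, hjg]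
  have hfinal : ∑ i ∈ Finset.Icc 1 k, (k:ℝ)⁻¹ * F i ≤ (k:ℝ)⁻¹ * Dd 0 := by
    rw [← Finset.mul_sum]
    exact mul_le_mul_of_nonneg_left hS (by positivity)
  have hlast : (k:ℝ)⁻¹ * Dd 0
      ≤ (3/(k:ℝ)) * ((2/τ) * breg φp gp x (X 0) + (1/σ) * breg φd gd z (Z 0)) := by
    calc (k:ℝ)⁻¹ * Dd 0
        ≤ (k:ℝ)⁻¹ * (3 * ((2/τ) * breg φp gp x (X 0) + (1/σ) * breg φd gd z (Z 0))) :=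
          mul_le_mul_of_nonneg_left hD0 (by positivity)
    _ = (3/(k:ℝ)) * ((2/τ) * breg φp gp x (X 0) + (1/σ) * breg φd gd z (Z 0)) := by
      ring
  linarith [hmain, hfinal, hlast]
end
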